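/- arXiv:2107.10461 — 9 statements merged into one kernel-verified Lean document; each statement's English description precedes it below -/
import Mathlib

section
/- For every matrix A = (a_{k,n}) ∈ ℝ^{K×N}, every real ε, and every function p : {0,1}^K → ℝ, the average throughput satisfies \bar T(A,ε,p) = Σ_{m=1}^K m (−1)^{m−1} ε^m Σ_{n=1}^N Σ_{K' ⊆ {1,…,K}, |K'| = m} ( Σ_{x ∈ {0,1}^K} p_x Π_{k∈K'} x_k ) Π_{k∈K'} a_{k,n}. -/
open Finset

/-- Value in {0,1} ⊆ ℝ of a binary activity state coordinate. -/
noncomputable def xv {K : ℕ} (x : Fin K → Bool) (k : Fin K) : ℝ := if x k then 1 else 0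

/-- Conditional throughput T(A, ε, x). -/
noncomputable def condT {K N : ℕ} (A : Fin K → Fin N → ℝ) (ε : ℝ) (x : Fin K → Bool) : ℝ :=
  ∑ n : Fin N, ∑ k : Fin K,
    xv x k * A k n * ε * ∏ l ∈ Finset.univ.erase k, (1 - xv x l * A l n * ε)

/-- Average throughput  \bar T(A, ε, p). -/
noncomputable def avgT {K N : ℕ} (A : Fin K → Fin N → ℝ) (ε : ℝ)
    (p : (Fin K → Bool) → ℝ) : ℝ :=
  ∑ x : Fin K → Bool, p x * condT A ε x

lemma prod_one_sub_aux {ι : Type*} [DecidableEq ι] (s : Finset ι) (y : ι → ℝ) :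
    ∏ l ∈ s, (1 - y l) = ∑ t ∈ s.powerset, (-1) ^ t.card * ∏ k ∈ t, y k := by
  have h : ∀ l ∈ s, (1 : ℝ) - y l = (-y l) + 1 := fun l _ => by ring
  rw [Finset.prod_congr rfl h, Finset.prod_add]
  refine Finset.sum_congr rfl fun t _ => ?_
  rw [Finset.prod_const_one, mul_one]
  rw [Finset.prod_congr rfl (fun i _ => (neg_one_mul (y i)).symm), Finset.prod_mul_distrib,
    Finset.prod_const]

lemma key_aux {K : ℕ} (y : Fin K → ℝ) :
    ∑ k, y k * ∏ l ∈ Finset.univ.erase k, (1 - y l)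
      = ∑ S ∈ (Finset.univ : Finset (Fin K)).powerset,
          (S.card : ℝ) * (-1) ^ (S.card - 1) * ∏ k ∈ S, y k := by
  have hr : ∀ S : Finset (Fin K),
      (S.card : ℝ) * (-1) ^ (S.card - 1) * ∏ k ∈ S, y k
        = ∑ k ∈ S, (-1 : ℝ) ^ (S.card - 1) * ∏ j ∈ S, y j := by
    intro S
    rw [Finset.sum_const, nsmul_eq_mul]
    ring
  simp_rw [hr, prod_one_sub_aux, Finset.mul_sum]
  rw [Finset.sum_sigma', Finset.sum_sigma']
  refine Finset.sum_nbij' (fun a => ⟨insert a.1 a.2, a.1⟩) (fun b => ⟨b.2, b.1.erase b.2⟩)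
    ?_ ?_ ?_ ?_ ?_
  · rintro ⟨k, t⟩ h
    simp only [Finset.mem_sigma, Finset.mem_univ, Finset.mem_powerset] at h ⊢
    exact ⟨Finset.subset_univ _, Finset.mem_insert_self _ _⟩
  · rintro ⟨S, k⟩ h
    simp only [Finset.mem_sigma, Finset.mem_univ, Finset.mem_powerset] at h ⊢
    exact ⟨trivial, (Finset.erase_subset_erase _ (Finset.subset_univ _))⟩
  · rintro ⟨k, t⟩ h
    simp only [Finset.mem_sigma, Finset.mem_univ, Finset.mem_powerset] at h
    have hk : k ∉ t := fun hkt => (Finset.mem_erase.mp (h.2 hkt)).1 rfl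
    simp [Finset.erase_insert hk]
  · rintro ⟨S, k⟩ h
    simp only [Finset.mem_sigma, Finset.mem_powerset] at h
    simp [Finset.insert_erase h.2]
  · rintro ⟨k, t⟩ h
    simp only [Finset.mem_sigma, Finset.mem_univ, Finset.mem_powerset] at h
    have hk : k ∉ t := fun hkt => (Finset.mem_erase.mp (h.2 hkt)).1 rfl
    simp only [Finset.card_insert_of_notMem hk, Nat.add_sub_cancel,
      Finset.prod_insert hk]
    ring

theorem stmt_1 (K N : ℕ) (hK : 1 ≤ K) (hN : 1 ≤ N)
    (A : Fin K → Fin N → ℝ) (ε : ℝ) (p : (Fin K → Bool) → ℝ) :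
    avgT A ε p =
    ∑ m ∈ Finset.Icc 1 K, (m : ℝ) * (-1) ^ (m - 1) * ε ^ m *
      ∑ n : Fin N, ∑ S ∈ Finset.univ.powersetCard m,
        (∑ x : Fin K → Bool, p x * ∏ k ∈ S, xv x k) * ∏ k ∈ S, A k n := by
  unfold avgT condT
  have hkey : ∀ (x : Fin K → Bool) (n : Fin N),
      ∑ k, xv x k * A k n * ε * ∏ l ∈ Finset.univ.erase k, (1 - xv x l * A l n * ε)
        = ∑ S ∈ (Finset.univ : Finset (Fin K)).powerset,
            (S.card : ℝ) * (-1) ^ (S.card - 1) * ε ^ S.card *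
              ((∏ k ∈ S, xv x k) * ∏ k ∈ S, A k n) := by
    intro x n
    rw [key_aux (fun k => xv x k * A k n * ε)]
    refine Finset.sum_congr rfl fun S _ => ?_
    rw [Finset.prod_mul_distrib, Finset.prod_mul_distrib, Finset.prod_const]
    ring
  simp_rw [hkey]
  -- bring everything to the canonical form ∑ S ∈ powerset, ∑ n, ∑ x, ...
  have lhs_eq :
      ∑ x : Fin K → Bool, p x * ∑ n : Fin N, ∑ S ∈ (Finset.univ : Finset (Fin K)).powerset,
          (S.card : ℝ) * (-1) ^ (S.card - 1) * ε ^ S.card *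
            ((∏ k ∈ S, xv x k) * ∏ k ∈ S, A k n)
        = ∑ S ∈ (Finset.univ : Finset (Fin K)).powerset,
            (S.card : ℝ) * (-1) ^ (S.card - 1) * ε ^ S.card *
              ∑ n : Fin N, (∑ x : Fin K → Bool, p x * ∏ k ∈ S, xv x k) * ∏ k ∈ S, A k n := by
    calc
      ∑ x : Fin K → Bool, p x * ∑ n : Fin N, ∑ S ∈ (Finset.univ : Finset (Fin K)).powerset,
          (S.card : ℝ) * (-1) ^ (S.card - 1) * ε ^ S.card *
            ((∏ k ∈ S, xv x k) * ∏ k ∈ S, A k n)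
          = ∑ x : Fin K → Bool, ∑ n : Fin N, ∑ S ∈ (Finset.univ : Finset (Fin K)).powerset,
              p x * ((S.card : ℝ) * (-1) ^ (S.card - 1) * ε ^ S.card *
                ((∏ k ∈ S, xv x k) * ∏ k ∈ S, A k n)) := by
            simp_rw [Finset.mul_sum]
      _ = ∑ n : Fin N, ∑ x : Fin K → Bool, ∑ S ∈ (Finset.univ : Finset (Fin K)).powerset,
              p x * ((S.card : ℝ) * (-1) ^ (S.card - 1) * ε ^ S.card *
                ((∏ k ∈ S, xv x k) * ∏ k ∈ S, A k n)) := Finset.sum_comm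
      _ = ∑ n : Fin N, ∑ S ∈ (Finset.univ : Finset (Fin K)).powerset, ∑ x : Fin K → Bool,
              p x * ((S.card : ℝ) * (-1) ^ (S.card - 1) * ε ^ S.card *
                ((∏ k ∈ S, xv x k) * ∏ k ∈ S, A k n)) :=
            Finset.sum_congr rfl fun n _ => Finset.sum_comm
      _ = ∑ S ∈ (Finset.univ : Finset (Fin K)).powerset, ∑ n : Fin N, ∑ x : Fin K → Bool,
              p x * ((S.card : ℝ) * (-1) ^ (S.card - 1) * ε ^ S.card *
                ((∏ k ∈ S, xv x k) * ∏ k ∈ S, A k n)) := Finset.sum_comm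
      _ = ∑ S ∈ (Finset.univ : Finset (Fin K)).powerset,
            (S.card : ℝ) * (-1) ^ (S.card - 1) * ε ^ S.card *
              ∑ n : Fin N, (∑ x : Fin K → Bool, p x * ∏ k ∈ S, xv x k) * ∏ k ∈ S, A k n := by
            refine Finset.sum_congr rfl fun S _ => ?_
            rw [Finset.mul_sum]
            refine Finset.sum_congr rfl fun n _ => ?_
            rw [Finset.sum_mul, Finset.mul_sum]
            exact Finset.sum_congr rfl fun x _ => by ring
  rw [lhs_eq]
  rw [Finset.sum_powerset (Finset.univ : Finset (Fin K))
    (fun S => (S.card : ℝ) * (-1) ^ (S.card - 1) * ε ^ S.card *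
      ∑ n : Fin N, (∑ x : Fin K → Bool, p x * ∏ k ∈ S, xv x k) * ∏ k ∈ S, A k n)]
  have hcard : (Finset.univ : Finset (Fin K)).card = K := by simp
  rw [hcard]
  have step : ∀ m : ℕ, ∑ S ∈ (Finset.univ : Finset (Fin K)).powersetCard m,
      (S.card : ℝ) * (-1) ^ (S.card - 1) * ε ^ S.card *
        ∑ n : Fin N, (∑ x : Fin K → Bool, p x * ∏ k ∈ S, xv x k) * ∏ k ∈ S, A k n
      = (m : ℝ) * (-1) ^ (m - 1) * ε ^ m *
        ∑ n : Fin N, ∑ S ∈ Finset.univ.powersetCard m,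
          (∑ x : Fin K → Bool, p x * ∏ k ∈ S, xv x k) * ∏ k ∈ S, A k n := by
    intro m
    simp_rw [Finset.mul_sum]
    rw [Finset.sum_comm]
    refine Finset.sum_congr rfl fun n _ => ?_
    refine Finset.sum_congr rfl fun S hS => ?_
    rw [(Finset.mem_powersetCard.mp hS).2]
  simp_rw [step]
  -- drop the m = 0 term
  refine (Finset.sum_subset ?_ ?_).symm
  · intro m hm
    simp only [Finset.mem_Icc] at hm
    simp only [Finset.mem_range]
    omega
  · intro m hm hnm
    simp only [Finset.mem_range] at hm
    simp only [Finset.mem_Icc] at hnm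
    have : m = 0 := by omega
    subst this
    simp
end

section
/- Fix a device index k, real ε, rows a_ℓ ∈ ℝ^N for ℓ ≠ k, and p : {0,1}^K → ℝ. Let m be any index attaining the maximum of Q_{k,n}(a_{−k}, ε, p) over n ∈ {1,…,N}. Then for every a_k in the probability simplex (a_{k,n} ≥ 0 for all n and Σ_{n=1}^N a_{k,n} = 1), the average throughput with k-th row a_k is at most the average throughput with k-th row e_m; that is, \bar T(a_k, a_{−k}, ε, p) ≤ \bar T(e_m, a_{−k}, ε, p). -/
open Finset

/-- Q_{k,n}(a_{-k}, ε, p): partial derivative of the average throughput w.r.t. a_{k,n}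
(it does not depend on the k-th row of A). -/
noncomputable def Qkn {K N : ℕ} (k : Fin K) (A : Fin K → Fin N → ℝ) (ε : ℝ)
    (p : (Fin K → Bool) → ℝ) (n : Fin N) : ℝ :=
  ∑ m ∈ Finset.Icc 1 K, (m : ℝ) * (-1) ^ (m - 1) * ε ^ m *
    ∑ S ∈ (Finset.univ.powersetCard m).filter (fun S => k ∈ S),
      (∑ x : Fin K → Bool, p x * ∏ l ∈ S, xv x l) * ∏ l ∈ S.erase k, A l n

lemma aux_prod_one_sub {ι : Type*} [DecidableEq ι] (s : Finset ι) (c : ι → ℝ) :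
    ∏ l ∈ s, (1 - c l) = ∑ T ∈ s.powerset, (-1 : ℝ) ^ T.card * ∏ l ∈ T, c l := by
  induction s using Finset.induction_on with
  | empty => simp
  | insert _ _ ha ih =>
    rename_i a s
    rw [Finset.prod_insert ha, ih, Finset.sum_powerset_insert ha]
    have h : ∑ T ∈ s.powerset, (-1:ℝ)^(insert a T).card * ∏ l ∈ insert a T, c l
        = ∑ T ∈ s.powerset, (-(c a)) * ((-1:ℝ)^T.card * ∏ l ∈ T, c l) := by
      apply Finset.sum_congr rfl
      intro T hT
      have haT : a ∉ T := fun h => ha (Finset.mem_powerset.mp hT h)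
      rw [Finset.card_insert_of_notMem haT, Finset.prod_insert haT, pow_succ]
      ring
    rw [h, ← Finset.mul_sum]
    ring

lemma aux_swap {ι : Type*} [DecidableEq ι] (s : Finset ι) (f : ι → Finset ι → ℝ) :
    ∑ j ∈ s, ∑ T ∈ (s.erase j).powerset, f j (insert j T)
      = ∑ T ∈ s.powerset, ∑ j ∈ T, f j T := by
  rw [Finset.sum_sigma', Finset.sum_sigma']
  apply Finset.sum_nbij' (i := fun x => (⟨insert x.1 x.2, x.1⟩ : Σ _ : Finset ι, ι))
      (j := fun x => (⟨x.2, x.1.erase x.2⟩ : Σ _ : ι, Finset ι))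
  · rintro ⟨j, T⟩ hx
    simp only [Finset.mem_sigma, Finset.mem_powerset] at hx ⊢
    exact ⟨Finset.insert_subset hx.1 (hx.2.trans (Finset.erase_subset _ _)),
      Finset.mem_insert_self _ _⟩
  · rintro ⟨T, j⟩ hx
    simp only [Finset.mem_sigma, Finset.mem_powerset] at hx ⊢
    exact ⟨hx.1 hx.2, Finset.erase_subset_erase _ hx.1⟩
  · rintro ⟨j, T⟩ hx
    simp only [Finset.mem_sigma, Finset.mem_powerset] at hx
    have hjT : j ∉ T := fun h => (Finset.mem_erase.mp (hx.2 h)).1 rfl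
    simp [Finset.erase_insert hjT]
  · rintro ⟨T, j⟩ hx
    simp only [Finset.mem_sigma, Finset.mem_powerset] at hx
    simp [Finset.insert_erase hx.2]
  · rintro ⟨j, T⟩ _
    rfl

lemma aux_core {ι : Type*} [DecidableEq ι] (s : Finset ι) (c : ι → ℝ) :
    ∏ l ∈ s, (1 - c l) - ∑ j ∈ s, c j * ∏ l ∈ s.erase j, (1 - c l)
      = ∑ T ∈ s.powerset, ((T.card : ℝ) + 1) * (-1) ^ T.card * ∏ l ∈ T, c l := by
  have swap := aux_swap s (fun j T => c j * ((-1:ℝ) ^ (T.erase j).card * ∏ l ∈ T.erase j, c l))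
  beta_reduce at swap
  have h2 : ∑ j ∈ s, c j * ∏ l ∈ s.erase j, (1 - c l)
      = ∑ T ∈ s.powerset, (T.card : ℝ) * ((-1:ℝ) ^ (T.card - 1) * ∏ l ∈ T, c l) := by
    have step : ∑ j ∈ s, c j * ∏ l ∈ s.erase j, (1 - c l)
        = ∑ j ∈ s, ∑ T ∈ (s.erase j).powerset,
            c j * ((-1:ℝ) ^ ((insert j T).erase j).card * ∏ l ∈ (insert j T).erase j, c l) := by
      apply Finset.sum_congr rfl
      intro j hj
      rw [aux_prod_one_sub, Finset.mul_sum]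
      apply Finset.sum_congr rfl
      intro T hT
      have hjT : j ∉ T := fun h =>
        (Finset.mem_erase.mp (Finset.mem_powerset.mp hT h)).1 rfl
      rw [Finset.erase_insert hjT]
    rw [step, swap]
    apply Finset.sum_congr rfl
    intro T hT
    have key : ∀ j ∈ T, c j * ((-1:ℝ) ^ (T.erase j).card * ∏ l ∈ T.erase j, c l)
        = (-1:ℝ) ^ (T.card - 1) * ∏ l ∈ T, c l := by
      intro j hj
      rw [Finset.card_erase_of_mem hj, ← Finset.mul_prod_erase T c hj]
      ring
    rw [Finset.sum_congr rfl key, Finset.sum_const, nsmul_eq_mul]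
  rw [aux_prod_one_sub, h2, ← Finset.sum_sub_distrib]
  apply Finset.sum_congr rfl
  intro T hT
  rcases Nat.eq_zero_or_pos T.card with h0 | h0
  · rw [h0]
    norm_num
  · obtain ⟨n, hn⟩ := Nat.exists_eq_add_of_lt h0
    rw [hn, zero_add]
    have hsub : n + 1 - 1 = n := rfl
    rw [hsub]
    push_cast
    rw [pow_succ]
    ring

lemma Qkn_eq {K N : ℕ} (k : Fin K) (A : Fin K → Fin N → ℝ) (ε : ℝ)
    (p : (Fin K → Bool) → ℝ) (n : Fin N) :
    Qkn k A ε p n = ε * ∑ x : Fin K → Bool, p x * (xv x k *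
      ∑ T ∈ ((Finset.univ : Finset (Fin K)).erase k).powerset,
        ((T.card : ℝ) + 1) * (-1) ^ T.card * ∏ l ∈ T, (xv x l * A l n * ε)) := by
  classical
  set F : Finset (Fin K) → ℝ := fun S =>
    (S.card : ℝ) * (-1) ^ (S.card - 1) * ε ^ S.card *
      ((∑ x : Fin K → Bool, p x * ∏ l ∈ S, xv x l) * ∏ l ∈ S.erase k, A l n) with hF
  set G : Finset (Fin K) → ℝ := fun T =>
    ((T.card : ℝ) + 1) * (-1) ^ T.card * ε ^ (T.card + 1) *
      ((∑ x : Fin K → Bool, p x * (xv x k * ∏ l ∈ T, xv x l)) * ∏ l ∈ T, A l n) with hG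
  have valeq : ∀ T : Finset (Fin K), k ∉ T → F (insert k T) = G T := by
    intro T hkT
    rw [hF, hG]
    simp only
    rw [Finset.card_insert_of_notMem hkT, Finset.erase_insert hkT, Nat.add_sub_cancel]
    have hx : ∑ x : Fin K → Bool, p x * ∏ l ∈ insert k T, xv x l
        = ∑ x : Fin K → Bool, p x * (xv x k * ∏ l ∈ T, xv x l) := by
      apply Finset.sum_congr rfl
      intro x _
      rw [Finset.prod_insert hkT]
    rw [hx]
    push_cast
    ring
  have step1 : Qkn k A ε p n = ∑ S ∈ Finset.univ.powerset.filter (fun S => k ∈ S), F S := by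
    rw [Qkn]
    have inner : ∀ m ∈ Finset.Icc 1 K,
        (m : ℝ) * (-1) ^ (m - 1) * ε ^ m *
          ∑ S ∈ (Finset.univ.powersetCard m).filter (fun S => k ∈ S),
            (∑ x : Fin K → Bool, p x * ∏ l ∈ S, xv x l) * ∏ l ∈ S.erase k, A l n
        = ∑ S ∈ (Finset.univ.powersetCard m).filter (fun S => k ∈ S), F S := by
      intro m _
      rw [Finset.mul_sum]
      apply Finset.sum_congr rfl
      intro S hS
      have hcard : S.card = m := (Finset.mem_powersetCard.mp (Finset.mem_filter.mp hS).1).2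
      rw [hF]
      simp only
      rw [hcard]
    rw [Finset.sum_congr rfl inner]
    have hsets : Finset.univ.powerset.filter (fun S => k ∈ S)
        = (Finset.Icc 1 K).biUnion
            (fun m => (Finset.univ.powersetCard m).filter (fun S => k ∈ S)) := by
      ext S
      simp only [Finset.mem_filter, Finset.mem_powerset, Finset.mem_biUnion, Finset.mem_Icc,
        Finset.mem_powersetCard]
      constructor
      · rintro ⟨hsub, hk⟩
        refine ⟨S.card, ⟨Finset.card_pos.mpr ⟨k, hk⟩, ?_⟩, ⟨hsub, rfl⟩, hk⟩
        calc S.card ≤ (Finset.univ : Finset (Fin K)).card := Finset.card_le_univ S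
          _ = K := by simp
      · rintro ⟨m, _, ⟨hsub, _⟩, hk⟩
        exact ⟨hsub, hk⟩
    rw [hsets, Finset.sum_biUnion]
    intro m1 h1 m2 h2 hne
    simp only [Function.onFun]
    rw [Finset.disjoint_left]
    intro S hS1 hS2
    exact hne (((Finset.mem_powersetCard.mp (Finset.mem_filter.mp hS1).1).2).symm.trans
      (Finset.mem_powersetCard.mp (Finset.mem_filter.mp hS2).1).2)
  have step2 : ∑ S ∈ Finset.univ.powerset.filter (fun S => k ∈ S), F S
      = ∑ T ∈ ((Finset.univ : Finset (Fin K)).erase k).powerset, G T := by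
    apply Finset.sum_nbij' (i := fun S => S.erase k) (j := fun T => insert k T)
    · intro S hS
      simp only [Finset.mem_filter, Finset.mem_powerset] at hS ⊢
      exact Finset.erase_subset_erase _ hS.1
    · intro T hT
      simp only [Finset.mem_filter, Finset.mem_powerset] at hT ⊢
      exact ⟨Finset.insert_subset (Finset.mem_univ k) (hT.trans (Finset.erase_subset _ _)),
        Finset.mem_insert_self _ _⟩
    · intro S hS
      exact Finset.insert_erase (Finset.mem_filter.mp hS).2
    · intro T hT
      exact Finset.erase_insert fun h =>
        (Finset.mem_erase.mp (Finset.mem_powerset.mp hT h)).1 rfl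
    · intro S hS
      have hk : k ∈ S := (Finset.mem_filter.mp hS).2
      have := valeq (S.erase k) (Finset.notMem_erase _ _)
      rw [Finset.insert_erase hk] at this
      exact this
  have step3 : ε * ∑ x : Fin K → Bool, p x * (xv x k *
      ∑ T ∈ ((Finset.univ : Finset (Fin K)).erase k).powerset,
        ((T.card : ℝ) + 1) * (-1) ^ T.card * ∏ l ∈ T, (xv x l * A l n * ε))
      = ∑ T ∈ ((Finset.univ : Finset (Fin K)).erase k).powerset, G T := by
    have hx : ∀ x : Fin K → Bool, p x * (xv x k *
        ∑ T ∈ ((Finset.univ : Finset (Fin K)).erase k).powerset,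
          ((T.card : ℝ) + 1) * (-1) ^ T.card * ∏ l ∈ T, (xv x l * A l n * ε))
        = ∑ T ∈ ((Finset.univ : Finset (Fin K)).erase k).powerset,
            p x * (xv x k * (((T.card : ℝ) + 1) * (-1) ^ T.card *
              ∏ l ∈ T, (xv x l * A l n * ε))) := by
      intro x
      rw [Finset.mul_sum, Finset.mul_sum]
    rw [Finset.sum_congr rfl (fun x _ => hx x), Finset.sum_comm, Finset.mul_sum]
    apply Finset.sum_congr rfl
    intro T _
    have hterm : ∀ x : Fin K → Bool,
        p x * (xv x k * (((T.card : ℝ) + 1) * (-1) ^ T.card * ∏ l ∈ T, (xv x l * A l n * ε)))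
        = (p x * (xv x k * ∏ l ∈ T, xv x l)) *
            (((T.card : ℝ) + 1) * (-1) ^ T.card * ((∏ l ∈ T, A l n) * ε ^ T.card)) := by
      intro x
      have hprod : ∏ l ∈ T, (xv x l * A l n * ε)
          = (∏ l ∈ T, xv x l) * (∏ l ∈ T, A l n) * ε ^ T.card := by
        rw [Finset.prod_mul_distrib, Finset.prod_mul_distrib, Finset.prod_const]
      rw [hprod]
      ring
    rw [Finset.sum_congr rfl (fun x _ => hterm x), ← Finset.sum_mul, hG]
    simp only
    rw [pow_succ]
    ring
  rw [step1, step2, ← step3]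

lemma perx {K N : ℕ} (k : Fin K) (A : Fin K → Fin N → ℝ) (ε : ℝ) (x : Fin K → Bool)
    (n : Fin N) (b : Fin N → ℝ) :
    ∑ j : Fin K, xv x j * Function.update A k b j n * ε *
        ∏ l ∈ Finset.univ.erase j, (1 - xv x l * Function.update A k b l n * ε)
    = xv x k * b n * ε * ∏ l ∈ Finset.univ.erase k, (1 - xv x l * A l n * ε)
      + ∑ j ∈ Finset.univ.erase k, (xv x j * A j n * ε) *
          ((1 - xv x k * b n * ε) *
            ∏ l ∈ (Finset.univ.erase k).erase j, (1 - xv x l * A l n * ε)) := by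
  classical
  rw [← Finset.add_sum_erase _ _ (Finset.mem_univ k)]
  congr 1
  · rw [Function.update_self]
    congr 1
    apply Finset.prod_congr rfl
    intro l hl
    rw [Function.update_of_ne (Finset.mem_erase.mp hl).1]
  · apply Finset.sum_congr rfl
    intro j hj
    have hjk : j ≠ k := (Finset.mem_erase.mp hj).1
    rw [Function.update_of_ne hjk]
    have hkj : k ∈ Finset.univ.erase j := Finset.mem_erase.mpr ⟨hjk.symm, Finset.mem_univ k⟩
    rw [← Finset.mul_prod_erase _ _ hkj, Function.update_self, Finset.erase_right_comm]
    have : ∏ l ∈ (Finset.univ.erase k).erase j, (1 - xv x l * Function.update A k b l n * ε)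
        = ∏ l ∈ (Finset.univ.erase k).erase j, (1 - xv x l * A l n * ε) := by
      apply Finset.prod_congr rfl
      intro l hl
      rw [Function.update_of_ne (Finset.mem_erase.mp (Finset.mem_of_mem_erase hl)).1]
    rw [this]

lemma col {K N : ℕ} (k : Fin K) (A : Fin K → Fin N → ℝ) (ε : ℝ)
    (p : (Fin K → Bool) → ℝ) (a : Fin N → ℝ) (n : Fin N) :
    ∑ x : Fin K → Bool, p x * ∑ j : Fin K, xv x j * Function.update A k a j n * ε *
        ∏ l ∈ Finset.univ.erase j, (1 - xv x l * Function.update A k a l n * ε)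
    = (∑ x : Fin K → Bool, p x * ∑ j : Fin K,
        xv x j * Function.update A k (fun _ => (0:ℝ)) j n * ε *
          ∏ l ∈ Finset.univ.erase j, (1 - xv x l * Function.update A k (fun _ => (0:ℝ)) l n * ε))
      + a n * Qkn k A ε p n := by
  classical
  rw [Qkn_eq]
  have hperx : ∀ x : Fin K → Bool,
      ∑ j : Fin K, xv x j * Function.update A k a j n * ε *
          ∏ l ∈ Finset.univ.erase j, (1 - xv x l * Function.update A k a l n * ε)
      = (∑ j : Fin K, xv x j * Function.update A k (fun _ => (0:ℝ)) j n * ε *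
          ∏ l ∈ Finset.univ.erase j, (1 - xv x l * Function.update A k (fun _ => (0:ℝ)) l n * ε))
        + a n * ε * (xv x k *
            ∑ T ∈ ((Finset.univ : Finset (Fin K)).erase k).powerset,
              ((T.card : ℝ) + 1) * (-1) ^ T.card * ∏ l ∈ T, (xv x l * A l n * ε)) := by
    intro x
    have hcore := aux_core ((Finset.univ : Finset (Fin K)).erase k)
      (fun l => xv x l * A l n * ε)
    beta_reduce at hcore
    rw [perx k A ε x n a, perx k A ε x n (fun _ => (0:ℝ)), ← hcore]
    simp only [mul_zero, zero_mul, sub_zero, one_mul, zero_add]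
    have hsum : ∑ j ∈ Finset.univ.erase k, (xv x j * A j n * ε) *
        ((1 - xv x k * a n * ε) *
          ∏ l ∈ (Finset.univ.erase k).erase j, (1 - xv x l * A l n * ε))
        = (∑ j ∈ Finset.univ.erase k, (xv x j * A j n * ε) *
            ∏ l ∈ (Finset.univ.erase k).erase j, (1 - xv x l * A l n * ε))
          - (xv x k * a n * ε) * ∑ j ∈ Finset.univ.erase k, (xv x j * A j n * ε) *
            ∏ l ∈ (Finset.univ.erase k).erase j, (1 - xv x l * A l n * ε) := by
      rw [Finset.mul_sum, ← Finset.sum_sub_distrib]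
      apply Finset.sum_congr rfl
      intro j _
      ring
    rw [hsum]
    ring
  have h1 : ∀ x : Fin K → Bool,
      p x * ∑ j : Fin K, xv x j * Function.update A k a j n * ε *
          ∏ l ∈ Finset.univ.erase j, (1 - xv x l * Function.update A k a l n * ε)
      = p x * (∑ j : Fin K, xv x j * Function.update A k (fun _ => (0:ℝ)) j n * ε *
          ∏ l ∈ Finset.univ.erase j,
            (1 - xv x l * Function.update A k (fun _ => (0:ℝ)) l n * ε))
        + (a n * ε) * (p x * (xv x k *
            ∑ T ∈ ((Finset.univ : Finset (Fin K)).erase k).powerset,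
              ((T.card : ℝ) + 1) * (-1) ^ T.card * ∏ l ∈ T, (xv x l * A l n * ε))) := by
    intro x
    rw [hperx x]
    ring
  rw [Finset.sum_congr rfl (fun x _ => h1 x), Finset.sum_add_distrib, ← Finset.mul_sum]
  ring

lemma avg_expand {K N : ℕ} (A' : Fin K → Fin N → ℝ) (ε : ℝ) (p : (Fin K → Bool) → ℝ) :
    avgT A' ε p = ∑ n : Fin N, ∑ x : Fin K → Bool, p x * ∑ j : Fin K,
      xv x j * A' j n * ε * ∏ l ∈ Finset.univ.erase j, (1 - xv x l * A' l n * ε) := by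
  rw [avgT]
  have h : ∀ x : Fin K → Bool, p x * condT A' ε x
      = ∑ n : Fin N, p x * ∑ j : Fin K,
          xv x j * A' j n * ε * ∏ l ∈ Finset.univ.erase j, (1 - xv x l * A' l n * ε) := by
    intro x
    rw [condT, Finset.mul_sum]
  rw [Finset.sum_congr rfl (fun x _ => h x), Finset.sum_comm]

lemma avg_affine {K N : ℕ} (k : Fin K) (A : Fin K → Fin N → ℝ) (ε : ℝ)
    (p : (Fin K → Bool) → ℝ) (a : Fin N → ℝ) :
    avgT (Function.update A k a) ε p
      = avgT (Function.update A k (fun _ => (0:ℝ))) ε p + ∑ n, a n * Qkn k A ε p n := by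
  rw [avg_expand, avg_expand, ← Finset.sum_add_distrib]
  exact Finset.sum_congr rfl (fun n _ => col k A ε p a n)

theorem stmt_2 (K N : ℕ) (hK : 1 ≤ K) (hN : 1 ≤ N)
    (k : Fin K) (ε : ℝ) (A : Fin K → Fin N → ℝ) (p : (Fin K → Bool) → ℝ)
    (m : Fin N) (hm : ∀ n : Fin N, Qkn k A ε p n ≤ Qkn k A ε p m) :
    ∀ a : Fin N → ℝ, (∀ n, 0 ≤ a n) → ∑ n, a n = 1 →
      avgT (Function.update A k a) ε p ≤
      avgT (Function.update A k (fun n => if n = m then (1 : ℝ) else 0)) ε p := by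
  intro a ha hsum
  rw [avg_affine k A ε p a, avg_affine k A ε p (fun n => if n = m then (1 : ℝ) else 0)]
  have h2 : ∑ n, (if n = m then (1:ℝ) else 0) * Qkn k A ε p n = Qkn k A ε p m := by
    simp
  rw [h2]
  apply add_le_add le_rfl
  calc ∑ n, a n * Qkn k A ε p n
      ≤ ∑ n, a n * Qkn k A ε p m :=
        Finset.sum_le_sum (fun n _ => mul_le_mul_of_nonneg_left (hm n) (ha n))
    _ = Qkn k A ε p m := by rw [← Finset.sum_mul, hsum, one_mul]
end

section
/- Let A ∈ ℝ^{K×N} be a feasible preamble selection matrix and p a joint device activity distribution, and let B(A,p) = { z ∈ [0,1] : q(A,z,p) = 0 }. Then there exists ε* ∈ B(A,p) ∪ {1} such that \bar T(A,ε*,p) ≥ \bar T(A,ε,p) for every ε ∈ [0,1]; i.e., the maximum of the average throughput over ε ∈ [0,1] is attained at a point of B(A,p) ∪ {1}. -/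
open Finset

/-- q(A, ε, p): the derivative of the average throughput w.r.t. ε. -/
noncomputable def qfun {K N : ℕ} (A : Fin K → Fin N → ℝ) (ε : ℝ)
    (p : (Fin K → Bool) → ℝ) : ℝ :=
  ∑ m ∈ Finset.Icc 1 K, (m : ℝ) ^ 2 * (-1) ^ (m - 1) * ε ^ (m - 1) *
    ∑ n : Fin N, ∑ S ∈ Finset.univ.powersetCard m,
      (∑ x : Fin K → Bool, p x * ∏ k ∈ S, xv x k) * ∏ k ∈ S, A k n

/-- Swap a sum over (set, element of set) pairs into (element, subset avoiding it). -/
lemma pair_swap {K : ℕ} (F : Finset (Fin K) → Fin K → ℝ) :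
    ∑ S ∈ (univ : Finset (Fin K)).powerset, ∑ k ∈ S, F S k
      = ∑ k : Fin K, ∑ t ∈ ((univ : Finset (Fin K)).erase k).powerset, F (insert k t) k := by
  rw [Finset.sum_sigma', Finset.sum_sigma']
  refine Finset.sum_nbij' (fun i => ⟨i.2, i.1.erase i.2⟩) (fun j => ⟨insert j.1 j.2, j.1⟩)
    ?_ ?_ ?_ ?_ ?_
  · rintro ⟨S, k⟩ hi
    simp only [Finset.mem_sigma, Finset.mem_powerset] at hi ⊢
    refine ⟨Finset.mem_univ _, ?_⟩
    intro a ha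
    simp only [Finset.mem_erase] at ha ⊢
    exact ⟨ha.1, Finset.mem_univ _⟩
  · rintro ⟨k, t⟩ hj
    simp only [Finset.mem_sigma, Finset.mem_powerset] at hj ⊢
    exact ⟨Finset.subset_univ _, Finset.mem_insert_self _ _⟩
  · rintro ⟨S, k⟩ hi
    simp only [Finset.mem_sigma, Finset.mem_powerset] at hi
    simp only [Sigma.mk.inj_iff, heq_eq_eq]
    exact ⟨Finset.insert_erase hi.2, trivial⟩
  · rintro ⟨k, t⟩ hj
    simp only [Finset.mem_sigma, Finset.mem_powerset] at hj
    have hkt : k ∉ t := fun h => (Finset.mem_erase.1 (hj.2 h)).1 rfl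
    simp only [Sigma.mk.inj_iff, heq_eq_eq]
    exact ⟨trivial, Finset.erase_insert hkt⟩
  · rintro ⟨S, k⟩ hi
    simp only [Finset.mem_sigma, Finset.mem_powerset] at hi
    simp [Finset.insert_erase hi.2]

/-- Expansion of the single-slot throughput into an alternating polynomial. -/
lemma expand_slot {K : ℕ} (b : Fin K → ℝ) (ε : ℝ) :
    ∑ k : Fin K, b k * ε * ∏ l ∈ Finset.univ.erase k, (1 - b l * ε)
      = ∑ S ∈ (univ : Finset (Fin K)).powerset,
          (S.card : ℝ) * (-1) ^ (S.card - 1) * ε ^ S.card * ∏ k ∈ S, b k := by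
  have hexp : ∀ k : Fin K, ∏ l ∈ Finset.univ.erase k, (1 - b l * ε)
      = ∑ t ∈ ((univ : Finset (Fin K)).erase k).powerset, ∏ l ∈ t, (-(b l * ε)) := by
    intro k
    have := Finset.prod_add (fun l : Fin K => -(b l * ε)) (fun _ => (1 : ℝ))
      (Finset.univ.erase k)
    simp only [Finset.prod_const_one, mul_one] at this
    rw [← this]
    congr 1; funext l; ring
  calc ∑ k : Fin K, b k * ε * ∏ l ∈ Finset.univ.erase k, (1 - b l * ε)
      = ∑ k : Fin K, ∑ t ∈ ((univ : Finset (Fin K)).erase k).powerset,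
          (-1) ^ ((insert k t).card - 1) * ε ^ (insert k t).card * ∏ l ∈ insert k t, b l := by
        refine Finset.sum_congr rfl fun k _ => ?_
        rw [hexp k, Finset.mul_sum]
        refine Finset.sum_congr rfl fun t ht => ?_
        have hkt : k ∉ t := fun h =>
          (Finset.mem_erase.1 (Finset.mem_powerset.1 ht h)).1 rfl
        rw [Finset.card_insert_of_notMem hkt, Finset.prod_insert hkt, Nat.add_sub_cancel]
        have h2 : ∏ l ∈ t, -(b l * ε) = (-1) ^ t.card * ε ^ t.card * ∏ l ∈ t, b l := by
          rw [← Finset.prod_const (-1 : ℝ), ← Finset.prod_const ε,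
            ← Finset.prod_mul_distrib, ← Finset.prod_mul_distrib]
          exact Finset.prod_congr rfl fun l _ => by ring
        rw [h2]; ring
    _ = ∑ S ∈ (univ : Finset (Fin K)).powerset,
          ∑ k ∈ S, (-1) ^ (S.card - 1) * ε ^ S.card * ∏ l ∈ S, b l := by
        rw [pair_swap (fun S k => (-1) ^ (S.card - 1) * ε ^ S.card * ∏ l ∈ S, b l)]
    _ = _ := by
        refine Finset.sum_congr rfl fun S _ => ?_
        rw [Finset.sum_const, nsmul_eq_mul]
        ring


/-- Polynomial expansion of the average throughput. -/
lemma avgT_eq {K N : ℕ} (A : Fin K → Fin N → ℝ) (p : (Fin K → Bool) → ℝ) (ε : ℝ) :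
    avgT A ε p = ∑ m ∈ Finset.Icc 1 K, (m : ℝ) * (-1) ^ (m - 1) * ε ^ m *
      ∑ n : Fin N, ∑ S ∈ Finset.univ.powersetCard m,
        (∑ x : Fin K → Bool, p x * ∏ k ∈ S, xv x k) * ∏ k ∈ S, A k n := by
  have h1 : ∀ (x : Fin K → Bool) (n : Fin N),
      ∑ k : Fin K, xv x k * A k n * ε * ∏ l ∈ Finset.univ.erase k, (1 - xv x l * A l n * ε)
      = ∑ m ∈ Finset.Icc 1 K, (m : ℝ) * (-1) ^ (m - 1) * ε ^ m *
          ∑ S ∈ (univ : Finset (Fin K)).powersetCard m, ∏ k ∈ S, (xv x k * A k n) := by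
    intro x n
    rw [expand_slot (fun k => xv x k * A k n) ε, Finset.sum_powerset, Finset.card_univ,
      Fintype.card_fin]
    have h2 : ∀ j ∈ Finset.range (K + 1),
        ∑ S ∈ (univ : Finset (Fin K)).powersetCard j,
          (S.card : ℝ) * (-1) ^ (S.card - 1) * ε ^ S.card * ∏ k ∈ S, (xv x k * A k n)
        = (j : ℝ) * (-1) ^ (j - 1) * ε ^ j *
            ∑ S ∈ (univ : Finset (Fin K)).powersetCard j, ∏ k ∈ S, (xv x k * A k n) := by
      intro j _
      rw [Finset.mul_sum]
      refine Finset.sum_congr rfl fun S hS => ?_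
      rw [(Finset.mem_powersetCard.1 hS).2]
    rw [Finset.sum_congr rfl h2]
    refine (Finset.sum_subset ?_ ?_).symm
    · intro j hj
      simp only [Finset.mem_Icc, Finset.mem_range] at hj ⊢
      omega
    · intro j hj hj'
      simp only [Finset.mem_Icc, Finset.mem_range] at hj hj'
      have : j = 0 := by omega
      simp [this]
  unfold avgT condT
  calc ∑ x : Fin K → Bool, p x * ∑ n : Fin N, ∑ k : Fin K,
        xv x k * A k n * ε * ∏ l ∈ Finset.univ.erase k, (1 - xv x l * A l n * ε)
      = ∑ x : Fin K → Bool, ∑ n : Fin N, ∑ m ∈ Finset.Icc 1 K,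
          p x * ((m : ℝ) * (-1) ^ (m - 1) * ε ^ m *
            ∑ S ∈ (univ : Finset (Fin K)).powersetCard m, ∏ k ∈ S, (xv x k * A k n)) := by
        refine Finset.sum_congr rfl fun x _ => ?_
        rw [Finset.mul_sum]
        refine Finset.sum_congr rfl fun n _ => ?_
        rw [h1 x n, Finset.mul_sum]
    _ = ∑ n : Fin N, ∑ x : Fin K → Bool, ∑ m ∈ Finset.Icc 1 K,
          p x * ((m : ℝ) * (-1) ^ (m - 1) * ε ^ m *
            ∑ S ∈ (univ : Finset (Fin K)).powersetCard m, ∏ k ∈ S, (xv x k * A k n)) :=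
        Finset.sum_comm
    _ = ∑ n : Fin N, ∑ m ∈ Finset.Icc 1 K, ∑ x : Fin K → Bool,
          p x * ((m : ℝ) * (-1) ^ (m - 1) * ε ^ m *
            ∑ S ∈ (univ : Finset (Fin K)).powersetCard m, ∏ k ∈ S, (xv x k * A k n)) :=
        Finset.sum_congr rfl fun n _ => Finset.sum_comm
    _ = ∑ m ∈ Finset.Icc 1 K, ∑ n : Fin N, ∑ x : Fin K → Bool,
          p x * ((m : ℝ) * (-1) ^ (m - 1) * ε ^ m *
            ∑ S ∈ (univ : Finset (Fin K)).powersetCard m, ∏ k ∈ S, (xv x k * A k n)) :=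
        Finset.sum_comm
    _ = _ := by
        refine Finset.sum_congr rfl fun m _ => ?_
        rw [Finset.mul_sum]
        refine Finset.sum_congr rfl fun n _ => ?_
        simp_rw [Finset.mul_sum, Finset.prod_mul_distrib, Finset.sum_mul]
        refine Finset.sum_comm.trans ?_
        refine Finset.sum_congr rfl fun S _ => ?_
        rw [Finset.mul_sum]
        exact Finset.sum_congr rfl fun x _ => by ring

/-- The derivative of the average throughput is `qfun`. -/
lemma hasDerivAt_avgT {K N : ℕ} (A : Fin K → Fin N → ℝ) (p : (Fin K → Bool) → ℝ) (ε : ℝ) :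
    HasDerivAt (fun z => avgT A z p) (qfun A ε p) ε := by
  have hfun : (fun z => avgT A z p)
      = fun z => ∑ m ∈ Finset.Icc 1 K,
          ((m : ℝ) * (-1) ^ (m - 1) *
            (∑ n : Fin N, ∑ S ∈ Finset.univ.powersetCard m,
              (∑ x : Fin K → Bool, p x * ∏ k ∈ S, xv x k) * ∏ k ∈ S, A k n)) * z ^ m := by
    funext z
    rw [avgT_eq]
    exact Finset.sum_congr rfl fun m _ => by ring
  rw [hfun]
  unfold qfun
  apply HasDerivAt.fun_sum
  intro m _
  have h := (hasDerivAt_pow m ε).const_mul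
    ((m : ℝ) * (-1) ^ (m - 1) *
      (∑ n : Fin N, ∑ S ∈ Finset.univ.powersetCard m,
        (∑ x : Fin K → Bool, p x * ∏ k ∈ S, xv x k) * ∏ k ∈ S, A k n))
  refine h.congr_deriv ?_
  ring


theorem stmt_3 (K N : ℕ) (hK : 1 ≤ K) (hN : 1 ≤ N)
    (A : Fin K → Fin N → ℝ) (hA0 : ∀ k n, 0 ≤ A k n) (hA1 : ∀ k, ∑ n, A k n = 1)
    (p : (Fin K → Bool) → ℝ) (hp0 : ∀ x, 0 ≤ p x) (hp1 : ∑ x, p x = 1) :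
    ∃ εstar ∈ {z : ℝ | z ∈ Set.Icc (0 : ℝ) 1 ∧ qfun A z p = 0} ∪ {1},
      ∀ ε ∈ Set.Icc (0 : ℝ) 1, avgT A ε p ≤ avgT A εstar p := by
  have hA1' : ∀ k n, A k n ≤ 1 := by
    intro k n
    calc A k n ≤ ∑ n', A k n' :=
          Finset.single_le_sum (fun n' _ => hA0 k n') (Finset.mem_univ n)
      _ = 1 := hA1 k
  have hxv01 : ∀ (x : Fin K → Bool) (k : Fin K), 0 ≤ xv x k ∧ xv x k ≤ 1 := by
    intro x k; unfold xv; split <;> norm_num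
  -- continuity
  have hdiff : Differentiable ℝ (fun z => avgT A z p) :=
    fun z => (hasDerivAt_avgT A p z).differentiableAt
  have hcont : ContinuousOn (fun z => avgT A z p) (Set.Icc 0 1) :=
    hdiff.continuous.continuousOn
  obtain ⟨ε₀, hε₀, hmax⟩ := isCompact_Icc.exists_isMaxOn
    (Set.nonempty_Icc.2 zero_le_one) hcont
  have hmax' : ∀ ε ∈ Set.Icc (0 : ℝ) 1, avgT A ε p ≤ avgT A ε₀ p := fun ε hε => hmax hε
  -- avgT at 0 is 0
  have h0 : avgT A 0 p = 0 := by
    unfold avgT condT; simp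
  -- avgT at 1 is nonnegative
  have h1 : 0 ≤ avgT A 1 p := by
    unfold avgT condT
    refine Finset.sum_nonneg fun x _ => mul_nonneg (hp0 x) ?_
    refine Finset.sum_nonneg fun n _ => Finset.sum_nonneg fun k _ => ?_
    refine mul_nonneg (mul_nonneg (mul_nonneg (hxv01 x k).1 (hA0 k n)) zero_le_one) ?_
    refine Finset.prod_nonneg fun l _ => ?_
    have := (hxv01 x l).1
    have := (hxv01 x l).2
    have h1' := hA1' l n
    have h0' := hA0 l n
    nlinarith [mul_le_one₀ (hxv01 x l).2 (hA0 l n) (hA1' l n)]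
  by_cases hEq : avgT A ε₀ p ≤ avgT A 1 p
  · exact ⟨1, Set.mem_union_right _ rfl,
      fun ε hε => le_trans (hmax' ε hε) hEq⟩
  · push_neg at hEq
    have hne1 : ε₀ ≠ 1 := fun h => by rw [h] at hEq; exact lt_irrefl _ hEq
    have hne0 : ε₀ ≠ 0 := by
      intro h
      rw [h, h0] at hEq
      linarith
    have hlt0 : 0 < ε₀ := lt_of_le_of_ne hε₀.1 (Ne.symm hne0)
    have hlt1 : ε₀ < 1 := lt_of_le_of_ne hε₀.2 hne1
    have hloc : IsLocalMax (fun z => avgT A z p) ε₀ :=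
      hmax.isLocalMax (Icc_mem_nhds hlt0 hlt1)
    have hq : qfun A ε₀ p = 0 := hloc.hasDerivAt_eq_zero (hasDerivAt_avgT A p ε₀)
    exact ⟨ε₀, Set.mem_union_left _ ⟨hε₀, hq⟩, hmax'⟩
end

section
/- Let A ∈ ℝ^{K×N} be a feasible preamble selection matrix and p a joint device activity distribution with p_0 < 1, where 0 denotes the all-zero activity state. Then q(A,0,p) > 0, the polynomial z ↦ q(A,z,p) is not identically zero, and the set B(A,p) = { z ∈ [0,1] : q(A,z,p) = 0 } is finite with at most K − 1 elements. -/
open Finset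

/-- The polynomial whose evaluation at ε is `qfun A ε p`. -/
noncomputable def qpoly {K N : ℕ} (A : Fin K → Fin N → ℝ)
    (p : (Fin K → Bool) → ℝ) : Polynomial ℝ :=
  ∑ m ∈ Finset.Icc 1 K, Polynomial.C ((m : ℝ) ^ 2 * (-1) ^ (m - 1) *
    ∑ n : Fin N, ∑ S ∈ Finset.univ.powersetCard m,
      (∑ x : Fin K → Bool, p x * ∏ k ∈ S, xv x k) * ∏ k ∈ S, A k n) *
    Polynomial.X ^ (m - 1)

lemma qpoly_eval {K N : ℕ} (A : Fin K → Fin N → ℝ) (p : (Fin K → Bool) → ℝ) (z : ℝ) :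
    (qpoly A p).eval z = qfun A z p := by
  simp only [qpoly, qfun, Polynomial.eval_finset_sum, Polynomial.eval_mul,
    Polynomial.eval_C, Polynomial.eval_pow, Polynomial.eval_X]
  apply Finset.sum_congr rfl
  intro m _
  ring

lemma qpoly_natDegree {K N : ℕ} (A : Fin K → Fin N → ℝ) (p : (Fin K → Bool) → ℝ) :
    (qpoly A p).natDegree ≤ K - 1 := by
  apply Polynomial.natDegree_sum_le_of_forall_le
  intro m hm
  refine le_trans (Polynomial.natDegree_C_mul_X_pow_le _ _) ?_
  exact Nat.sub_le_sub_right (Finset.mem_Icc.mp hm).2 1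

theorem stmt_5 (K N : ℕ) (hK : 1 ≤ K) (hN : 1 ≤ N)
    (A : Fin K → Fin N → ℝ) (hA0 : ∀ k n, 0 ≤ A k n) (hA1 : ∀ k, ∑ n, A k n = 1)
    (p : (Fin K → Bool) → ℝ) (hp0 : ∀ x, 0 ≤ p x) (hp1 : ∑ x, p x = 1)
    (hp0lt : p (fun _ => false) < 1) :
    0 < qfun A 0 p ∧
    (∃ z : ℝ, qfun A z p ≠ 0) ∧
    {z : ℝ | z ∈ Set.Icc (0 : ℝ) 1 ∧ qfun A z p = 0}.Finite ∧
    {z : ℝ | z ∈ Set.Icc (0 : ℝ) 1 ∧ qfun A z p = 0}.ncard ≤ K - 1 := by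
  -- Step 1: q(A,0,p) > 0.
  have hxexists : ∃ x : Fin K → Bool, x ≠ (fun _ => false) ∧ 0 < p x := by
    by_contra h
    push_neg at h
    have hz : ∀ x ∈ (Finset.univ : Finset (Fin K → Bool)), x ≠ (fun _ => false) → p x = 0 := by
      intro x _ hx
      exact le_antisymm (le_of_not_gt fun hlt => (h x hx).not_gt hlt) (hp0 x)
    have := Finset.sum_eq_single (fun _ => false) (fun x hx hne => hz x hx hne)
      (fun h => absurd (Finset.mem_univ _) h)
    rw [hp1] at this
    exact absurd this.symm (ne_of_lt hp0lt)
  obtain ⟨x₀, hx₀ne, hx₀p⟩ := hxexists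
  obtain ⟨k₀, hk₀⟩ : ∃ k, x₀ k = true := by
    by_contra h
    push_neg at h
    exact hx₀ne (funext fun k => by simpa using h k)
  -- q(A,0,p) equals the m=1 term
  have hq0 : qfun A 0 p = ∑ n : Fin N, ∑ S ∈ Finset.univ.powersetCard 1,
      (∑ x : Fin K → Bool, p x * ∏ k ∈ S, xv x k) * ∏ k ∈ S, A k n := by
    unfold qfun
    rw [Finset.sum_eq_single 1]
    · norm_num
    · intro m hm hm1
      have h2 : 2 ≤ m := by
        rcases Finset.mem_Icc.mp hm with ⟨h1, _⟩
        omega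
      have : (0:ℝ) ^ (m - 1) = 0 := by
        apply zero_pow
        omega
      rw [this]; ring
    · intro h
      exact absurd (Finset.mem_Icc.mpr ⟨le_refl 1, hK⟩) h
  -- rewrite powersetCard 1 as singletons
  have hsing : ∀ (f : Finset (Fin K) → ℝ),
      ∑ S ∈ (Finset.univ : Finset (Fin K)).powersetCard 1, f S = ∑ k : Fin K, f {k} := by
    intro f
    rw [Finset.powersetCard_one, Finset.sum_map]
    rfl
  have hq0' : qfun A 0 p = ∑ k : Fin K, ∑ x : Fin K → Bool, p x * xv x k := by
    rw [hq0]
    rw [Finset.sum_comm]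
    rw [hsing (fun S => ∑ n : Fin N, (∑ x : Fin K → Bool, p x * ∏ k ∈ S, xv x k) * ∏ k ∈ S, A k n)]
    apply Finset.sum_congr rfl
    intro k _
    simp only [Finset.prod_singleton]
    rw [← Finset.mul_sum, hA1 k, mul_one]
  have hterm_nonneg : ∀ k : Fin K, 0 ≤ ∑ x : Fin K → Bool, p x * xv x k := by
    intro k
    apply Finset.sum_nonneg
    intro x _
    apply mul_nonneg (hp0 x)
    unfold xv; split <;> norm_num
  have hpos : 0 < qfun A 0 p := by
    rw [hq0']
    have hk0pos : 0 < ∑ x : Fin K → Bool, p x * xv x k₀ := by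
      have : 0 < p x₀ * xv x₀ k₀ := by
        unfold xv; rw [hk₀]; simpa using hx₀p
      calc 0 < p x₀ * xv x₀ k₀ := this
        _ ≤ ∑ x : Fin K → Bool, p x * xv x k₀ := by
            apply Finset.single_le_sum (f := fun x => p x * xv x k₀)
            · intro x _
              apply mul_nonneg (hp0 x)
              unfold xv; split <;> norm_num
            · exact Finset.mem_univ x₀
    calc 0 < ∑ x : Fin K → Bool, p x * xv x k₀ := hk0pos
      _ ≤ ∑ k : Fin K, ∑ x : Fin K → Bool, p x * xv x k := by
          apply Finset.single_le_sum (f := fun k => ∑ x : Fin K → Bool, p x * xv x k)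
          · intro k _; exact hterm_nonneg k
          · exact Finset.mem_univ k₀
  refine ⟨hpos, ⟨0, ne_of_gt hpos⟩, ?_, ?_⟩
  -- polynomial nonzero
  all_goals {
    have hPne : qpoly A p ≠ 0 := by
      intro h
      have h2 := hpos
      rw [← qpoly_eval A p 0, h, Polynomial.eval_zero] at h2
      exact lt_irrefl 0 h2
    have hsub : {z : ℝ | z ∈ Set.Icc (0:ℝ) 1 ∧ qfun A z p = 0} ⊆
        ↑(qpoly A p).roots.toFinset := by
      intro z hz
      rw [Finset.mem_coe, Multiset.mem_toFinset, Polynomial.mem_roots hPne,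
        Polynomial.IsRoot.def, qpoly_eval]
      exact hz.2
    first
    | exact Set.Finite.subset (Finset.finite_toSet _) hsub
    | { calc {z : ℝ | z ∈ Set.Icc (0:ℝ) 1 ∧ qfun A z p = 0}.ncard
          ≤ ((qpoly A p).roots.toFinset : Set ℝ).ncard :=
            Set.ncard_le_ncard hsub (Finset.finite_toSet _)
        _ = (qpoly A p).roots.toFinset.card := Set.ncard_coe_finset _
        _ ≤ Multiset.card (qpoly A p).roots := Multiset.toFinset_card_le _
        _ ≤ (qpoly A p).natDegree := Polynomial.card_roots' _
        _ ≤ K - 1 := qpoly_natDegree A p }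
  }
end

section
/- Let p be a joint device activity distribution. Then there exist a feasible preamble selection matrix A* each of whose rows is a standard basis vector (i.e., for every k there is n_k ∈ {1,…,N} with a*_k = e_{n_k}) and ε* ∈ [0,1] such that \bar T(A*, ε*, p) ≥ \bar T(A, ε, p) for every feasible A and every ε ∈ [0,1]. In other words, the average throughput maximization problem has a globally optimal point with deterministic preamble selection. -/
open Finset

/-- Basis vector. -/
noncomputable def ev (N : ℕ) (m : Fin N) : Fin N → ℝ := fun n => if n = m then 1 else 0

noncomputable def alph {K N : ℕ} (A : Fin K → Fin N → ℝ) (ε : ℝ) (x : Fin K → Bool)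
    (k : Fin K) (n : Fin N) : ℝ :=
  ∑ j ∈ Finset.univ.erase k,
    xv x j * A j n * ε * ∏ l ∈ (Finset.univ.erase j).erase k, (1 - xv x l * A l n * ε)

noncomputable def bet {K N : ℕ} (A : Fin K → Fin N → ℝ) (ε : ℝ) (x : Fin K → Bool)
    (k : Fin K) (n : Fin N) : ℝ :=
  xv x k * ε * ((∏ l ∈ Finset.univ.erase k, (1 - xv x l * A l n * ε)) - alph A ε x k n)

lemma condT_update {K N : ℕ} (A : Fin K → Fin N → ℝ) (ε : ℝ) (x : Fin K → Bool)
    (k : Fin K) (a : Fin N → ℝ) :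
    condT (Function.update A k a) ε x
      = ∑ n : Fin N, (alph A ε x k n + a n * bet A ε x k n) := by
  unfold condT
  refine Finset.sum_congr rfl fun n _ => ?_
  rw [← Finset.sum_erase_add _ _ (Finset.mem_univ k)]
  have hterm_k :
      xv x k * (Function.update A k a) k n * ε *
        ∏ l ∈ Finset.univ.erase k, (1 - xv x l * (Function.update A k a) l n * ε)
      = a n * (xv x k * ε * ∏ l ∈ Finset.univ.erase k, (1 - xv x l * A l n * ε)) := by
    rw [Function.update_self]
    rw [Finset.prod_congr rfl (fun l hl => by
      rw [Function.update_of_ne (Finset.ne_of_mem_erase hl)])]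
    ring
  have hterm_j : ∀ j ∈ Finset.univ.erase k,
      xv x j * (Function.update A k a) j n * ε *
        ∏ l ∈ Finset.univ.erase j, (1 - xv x l * (Function.update A k a) l n * ε)
      = (1 - xv x k * a n * ε) *
          (xv x j * A j n * ε *
            ∏ l ∈ (Finset.univ.erase j).erase k, (1 - xv x l * A l n * ε)) := by
    intro j hj
    have hjk : j ≠ k := Finset.ne_of_mem_erase hj
    rw [Function.update_of_ne hjk]
    have hk : k ∈ Finset.univ.erase j := Finset.mem_erase.2 ⟨hjk.symm, Finset.mem_univ k⟩
    rw [← Finset.mul_prod_erase _ _ hk, Function.update_self]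
    rw [Finset.prod_congr rfl (fun l hl => by
      rw [Function.update_of_ne (Finset.ne_of_mem_erase hl)])]
    ring
  rw [Finset.sum_congr rfl hterm_j, hterm_k, ← Finset.mul_sum]
  unfold bet alph
  ring

lemma sum_ev_mul {N : ℕ} (m : Fin N) (f : Fin N → ℝ) :
    ∑ n : Fin N, ev N m n * f n = f m := by
  simp [ev]

lemma condT_decomp {K N : ℕ} (A : Fin K → Fin N → ℝ) (ε : ℝ) (x : Fin K → Bool)
    (k : Fin K) (a : Fin N → ℝ) (ha : ∑ m, a m = 1) :
    condT (Function.update A k a) ε x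
      = ∑ m : Fin N, a m * condT (Function.update A k (ev N m)) ε x := by
  have hev : ∀ m : Fin N, condT (Function.update A k (ev N m)) ε x
      = (∑ n, alph A ε x k n) + bet A ε x k m := by
    intro m
    rw [condT_update, Finset.sum_add_distrib]
    congr 1
    exact sum_ev_mul m _
  simp only [hev, condT_update, Finset.sum_add_distrib, mul_add]
  congr 1
  rw [← Finset.sum_mul, ha, one_mul]

lemma avgT_decomp {K N : ℕ} (A : Fin K → Fin N → ℝ) (ε : ℝ) (p : (Fin K → Bool) → ℝ)
    (k : Fin K) (a : Fin N → ℝ) (ha : ∑ m, a m = 1) :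
    avgT (Function.update A k a) ε p
      = ∑ m : Fin N, a m * avgT (Function.update A k (ev N m)) ε p := by
  unfold avgT
  simp only [condT_decomp A ε _ k a ha, Finset.mul_sum]
  rw [Finset.sum_comm]
  refine Finset.sum_congr rfl fun m _ => ?_
  exact Finset.sum_congr rfl fun x _ => by ring


lemma improve {K N : ℕ} (hN : 0 < N) (p : (Fin K → Bool) → ℝ) (ε : ℝ) :
    ∀ (c : ℕ) (A : Fin K → Fin N → ℝ), (∀ k n, 0 ≤ A k n) → (∀ k, ∑ n, A k n = 1) →
      (Finset.univ.filter (fun j => ¬ ∃ m, A j = ev N m)).card ≤ c →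
      ∃ D : Fin K → Fin N → ℝ, (∀ k, ∃ m, D k = ev N m) ∧ avgT A ε p ≤ avgT D ε p := by
  classical
  intro c
  induction c with
  | zero =>
    intro A h0 h1 hc
    refine ⟨A, fun k => ?_, le_refl _⟩
    by_contra hk
    have : k ∈ Finset.univ.filter (fun j => ¬ ∃ m, A j = ev N m) :=
      Finset.mem_filter.2 ⟨Finset.mem_univ k, hk⟩
    rw [Finset.card_eq_zero.1 (Nat.le_zero.1 hc)] at this
    exact absurd this (Finset.notMem_empty k)
  | succ c ih =>
    intro A h0 h1 hc
    by_cases hall : ∀ j, ∃ m, A j = ev N m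
    · exact ⟨A, hall, le_refl _⟩
    · push_neg at hall
      obtain ⟨k, hk⟩ := hall
      have hdec : avgT A ε p = ∑ m : Fin N, A k m * avgT (Function.update A k (ev N m)) ε p := by
        conv_lhs => rw [← Function.update_eq_self k A]
        exact avgT_decomp A ε p k (A k) (h1 k)
      have hex : ∃ m, avgT A ε p ≤ avgT (Function.update A k (ev N m)) ε p := by
        by_contra h
        push_neg at h
        obtain ⟨m₀, hm₀⟩ : ∃ m₀, 0 < A k m₀ := by
          by_contra hall0
          push_neg at hall0
          have : ∑ n, A k n = 0 :=
            Finset.sum_eq_zero fun n _ => le_antisymm (hall0 n) (h0 k n)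
          rw [h1 k] at this; norm_num at this
        have hlt : ∑ m : Fin N, A k m * avgT (Function.update A k (ev N m)) ε p
            < ∑ m : Fin N, A k m * avgT A ε p := by
          refine Finset.sum_lt_sum (fun i _ => mul_le_mul_of_nonneg_left (h i).le (h0 k i))
            ⟨m₀, Finset.mem_univ m₀, mul_lt_mul_of_pos_left (h m₀) hm₀⟩
        rw [← Finset.sum_mul, h1 k, one_mul, ← hdec] at hlt
        exact lt_irrefl _ hlt
      obtain ⟨m, hm⟩ := hex
      set A' := Function.update A k (ev N m) with hA'
      have h0' : ∀ j n, 0 ≤ A' j n := by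
        intro j n
        rcases eq_or_ne j k with rfl | hjk
        · simp only [hA', Function.update_self, ev]; positivity
        · simp only [hA', Function.update_of_ne hjk]; exact h0 j n
      have h1' : ∀ j, ∑ n, A' j n = 1 := by
        intro j
        rcases eq_or_ne j k with rfl | hjk
        · simp [hA', ev]
        · simp only [hA', Function.update_of_ne hjk]; exact h1 j
      have hc' : (Finset.univ.filter (fun j => ¬ ∃ m, A' j = ev N m)).card ≤ c := by
        have hsub : Finset.univ.filter (fun j => ¬ ∃ m, A' j = ev N m)
            ⊆ (Finset.univ.filter (fun j => ¬ ∃ m, A j = ev N m)).erase k := by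
          intro j hj
          simp only [Finset.mem_filter, Finset.mem_univ, true_and] at hj
          have hjk : j ≠ k := by
            rintro rfl
            exact hj ⟨m, by simp [hA']⟩
          refine Finset.mem_erase.2 ⟨hjk, ?_⟩
          simp only [Finset.mem_filter, Finset.mem_univ, true_and]
          rwa [hA', Function.update_of_ne hjk] at hj
        have hkmem : k ∈ Finset.univ.filter (fun j => ¬ ∃ m, A j = ev N m) := by
          simp [hk]
        calc (Finset.univ.filter (fun j => ¬ ∃ m, A' j = ev N m)).card
            ≤ _ := Finset.card_le_card hsub
          _ = (Finset.univ.filter (fun j => ¬ ∃ m, A j = ev N m)).card - 1 :=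
              Finset.card_erase_of_mem hkmem
          _ ≤ c := by omega
      obtain ⟨D, hD, hle⟩ := ih A' h0' h1' hc'
      exact ⟨D, hD, hm.trans hle⟩

lemma avgT_continuous {K N : ℕ} (p : (Fin K → Bool) → ℝ) :
    Continuous fun q : (Fin K → Fin N → ℝ) × ℝ => avgT q.1 q.2 p := by
  unfold avgT condT
  apply continuous_finset_sum; intro x _
  apply Continuous.mul continuous_const
  apply continuous_finset_sum; intro n _
  apply continuous_finset_sum; intro k _
  have hev : ∀ (j : Fin K), Continuous fun q : (Fin K → Fin N → ℝ) × ℝ => q.1 j n :=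
    fun j => (continuous_apply n).comp ((continuous_apply j).comp continuous_fst)
  apply Continuous.mul
  · exact (continuous_const.mul (hev k)).mul continuous_snd
  · apply continuous_finset_prod; intro l _
    exact continuous_const.sub ((continuous_const.mul (hev l)).mul continuous_snd)

set_option maxHeartbeats 1000000 in
theorem stmt_6 (K N : ℕ) (hK : 1 ≤ K) (hN : 1 ≤ N)
    (p : (Fin K → Bool) → ℝ) (hp0 : ∀ x, 0 ≤ p x) (hp1 : ∑ x, p x = 1) :
    ∃ (Astar : Fin K → Fin N → ℝ) (εstar : ℝ),
      (∀ k : Fin K, ∃ nk : Fin N, Astar k = fun n => if n = nk then (1 : ℝ) else 0) ∧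
      εstar ∈ Set.Icc (0 : ℝ) 1 ∧
      (∀ (A : Fin K → Fin N → ℝ) (ε : ℝ),
        (∀ k n, 0 ≤ A k n) → (∀ k, ∑ n, A k n = 1) → ε ∈ Set.Icc (0 : ℝ) 1 →
        avgT A ε p ≤ avgT Astar εstar p) := by
  classical
  set Sm : Set (Fin K → Fin N → ℝ) :=
    {A | (∀ k n, 0 ≤ A k n) ∧ ∀ k, ∑ n, A k n = 1} with hSm
  set S : Set ((Fin K → Fin N → ℝ) × ℝ) := Sm ×ˢ Set.Icc (0 : ℝ) 1 with hS
  have hev : ∀ (j : Fin K) (n : Fin N),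
      Continuous fun A : Fin K → Fin N → ℝ => A j n :=
    fun j n => (continuous_apply n).comp (continuous_apply j)
  have hclosed : IsClosed Sm := by
    have h1 : IsClosed {A : Fin K → Fin N → ℝ | ∀ k n, 0 ≤ A k n} := by
      have : {A : Fin K → Fin N → ℝ | ∀ k n, 0 ≤ A k n}
          = ⋂ k, ⋂ n, {A | 0 ≤ A k n} := by ext A; simp [Set.mem_iInter]
      rw [this]
      exact isClosed_iInter fun k => isClosed_iInter fun n =>
        isClosed_le continuous_const (hev k n)
    have h2 : IsClosed {A : Fin K → Fin N → ℝ | ∀ k, ∑ n, A k n = 1} := by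
      have : {A : Fin K → Fin N → ℝ | ∀ k, ∑ n, A k n = 1}
          = ⋂ k, {A | ∑ n, A k n = 1} := by ext A; simp [Set.mem_iInter]
      rw [this]
      exact isClosed_iInter fun k =>
        isClosed_eq (continuous_finset_sum _ fun n _ => hev k n) continuous_const
    exact h1.inter h2
  have hcompactSm : IsCompact Sm := by
    refine IsCompact.of_isClosed_subset
      (isCompact_univ_pi (ι := Fin K) (s := fun _ => Set.univ.pi fun _ : Fin N => Set.Icc (0:ℝ) 1)
        fun _ => isCompact_univ_pi fun _ => isCompact_Icc) hclosed ?_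
    intro A hA
    rw [Set.mem_univ_pi]
    intro k
    rw [Set.mem_univ_pi]
    intro n
    refine ⟨hA.1 k n, ?_⟩
    calc A k n ≤ ∑ m, A k m :=
          Finset.single_le_sum (fun m _ => hA.1 k m) (Finset.mem_univ n)
      _ = 1 := hA.2 k
  have hcompactS : IsCompact S := hcompactSm.prod isCompact_Icc
  have hne : S.Nonempty := by
    refine ⟨⟨fun _ => ev N ⟨0, hN⟩, 0⟩, ⟨⟨fun k n => ?_, fun k => ?_⟩, by norm_num⟩⟩
    · unfold ev; positivity
    · simp [ev]
  obtain ⟨⟨A₀, ε₀⟩, hmem, hmax⟩ :=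
    hcompactS.exists_isMaxOn hne (avgT_continuous (N := N) p).continuousOn
  rw [isMaxOn_iff] at hmax
  obtain ⟨⟨hA₀0, hA₀1⟩, hε₀⟩ := hmem
  obtain ⟨D, hD, hle⟩ := improve hN p ε₀ ((Finset.univ.filter
    (fun j => ¬ ∃ m, A₀ j = ev N m)).card) A₀ hA₀0 hA₀1 le_rfl
  refine ⟨D, ε₀, fun k => ?_, hε₀, fun A ε hA0 hA1 hε => ?_⟩
  · obtain ⟨m, hm⟩ := hD k
    refine ⟨m, ?_⟩
    rw [hm]
    funext n
    simp [ev]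
  · have hmem' : (A, ε) ∈ S := ⟨⟨hA0, hA1⟩, hε⟩
    have h2 : avgT A ε p ≤ avgT A₀ ε₀ p := hmax (A, ε) hmem'
    exact h2.trans hle
end

section
/- Fix a device index k, ε ∈ [0,1], rows a_ℓ ∈ ℝ^N with a_{ℓ,n} ≥ 0 and Σ_n a_{ℓ,n} = 1 for each ℓ ≠ k, and a joint device activity distribution p. Let m be any index attaining the minimum over n ∈ {1,…,N} of Σ_{ℓ≠k} a_{ℓ,n} Σ_{x∈{0,1}^K} p_x x_k x_ℓ. Then for every a_k in the probability simplex (a_{k,n} ≥ 0, Σ_{n=1}^N a_{k,n} = 1), the approximate average throughput with k-th row a_k is at most that with k-th row e_m: \tilde T(a_k, a_{−k}, ε, p) ≤ \tilde T(e_m, a_{−k}, ε, p). -/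
open Finset

/-- Approximate average throughput  \tilde T(A, ε, p). -/
noncomputable def tildeT {K N : ℕ} (A : Fin K → Fin N → ℝ) (ε : ℝ)
    (p : (Fin K → Bool) → ℝ) : ℝ :=
  ε * ∑ k : Fin K, ∑ x : Fin K → Bool, p x * xv x k
  - ε ^ 2 * ∑ n : Fin N, ∑ k : Fin K, A k n *
      ∑ l ∈ Finset.univ.filter (fun l => k < l), A l n *
        ∑ x : Fin K → Bool, p x * xv x k * xv x l


lemma split_erase {K : ℕ} (k : Fin K) (f : Fin K → ℝ) :
    ∑ l ∈ Finset.univ.erase k, f l =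
    (∑ l ∈ Finset.univ.erase k, if l < k then f l else 0)
      + ∑ l ∈ Finset.univ.filter (fun l => k < l), f l := by
  have h1 : ∑ l ∈ Finset.univ.filter (fun l => k < l), f l
      = ∑ l ∈ Finset.univ.erase k, if k < l then f l else 0 := by
    rw [Finset.sum_filter]
    rw [← Finset.sum_erase (Finset.univ) (a := k) (f := fun l => if k < l then f l else 0)
      (by simp)]
  rw [h1, ← Finset.sum_add_distrib]
  refine Finset.sum_congr rfl fun l hl => ?_
  rcases lt_or_gt_of_ne (Finset.ne_of_mem_erase hl) with h | h
  · simp [h, not_lt_of_gt h]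
  · simp [h, not_lt_of_gt h]

lemma key' {K N : ℕ} (k : Fin K) (A : Fin K → Fin N → ℝ) (q : Fin K → Fin K → ℝ)
    (hq : ∀ i j, q i j = q j i) (a : Fin N → ℝ) :
    ∑ n : Fin N, ∑ j : Fin K, Function.update A k a j n *
        ∑ l ∈ Finset.univ.filter (fun l => j < l), Function.update A k a l n * q j l
    = (∑ n : Fin N, a n * ∑ l ∈ Finset.univ.erase k, A l n * q k l)
      + ∑ n : Fin N, ∑ j ∈ Finset.univ.erase k, A j n *
          ∑ l ∈ (Finset.univ.filter (fun l => j < l)).erase k, A l n * q j l := by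
  rw [← Finset.sum_add_distrib]
  refine Finset.sum_congr rfl fun n _ => ?_
  rw [← Finset.sum_erase_add _ _ (Finset.mem_univ k)]
  have hBk : Function.update A k a k n = a n := by rw [Function.update_self]
  have hinnerk : ∑ l ∈ Finset.univ.filter (fun l => k < l), Function.update A k a l n * q k l
      = ∑ l ∈ Finset.univ.filter (fun l => k < l), A l n * q k l := by
    refine Finset.sum_congr rfl fun l hl => ?_
    have hlk : l ≠ k := by
      have := (Finset.mem_filter.mp hl).2
      exact fun h => absurd (h ▸ this) (lt_irrefl k)
    rw [Function.update_of_ne hlk]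
  have hj : ∀ j ∈ Finset.univ.erase k,
      Function.update A k a j n *
        ∑ l ∈ Finset.univ.filter (fun l => j < l), Function.update A k a l n * q j l
      = A j n * ∑ l ∈ (Finset.univ.filter (fun l => j < l)).erase k, A l n * q j l
        + a n * (if j < k then A j n * q k j else 0) := by
    intro j hjmem
    have hjk : j ≠ k := Finset.ne_of_mem_erase hjmem
    rw [Function.update_of_ne hjk]
    by_cases h : j < k
    · have hkmem : k ∈ Finset.univ.filter (fun l => j < l) := by
        simp [h]
      rw [← Finset.sum_erase_add _ _ hkmem, hBk]
      have : ∑ l ∈ (Finset.univ.filter (fun l => j < l)).erase k,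
          Function.update A k a l n * q j l
          = ∑ l ∈ (Finset.univ.filter (fun l => j < l)).erase k, A l n * q j l := by
        refine Finset.sum_congr rfl fun l hl => ?_
        rw [Function.update_of_ne (Finset.ne_of_mem_erase hl)]
      rw [this, if_pos h, hq k j]
      ring
    · have hknot : k ∉ Finset.univ.filter (fun l => j < l) := by simp [h]
      rw [Finset.erase_eq_of_notMem hknot, if_neg h]
      have : ∑ l ∈ Finset.univ.filter (fun l => j < l),
          Function.update A k a l n * q j l
          = ∑ l ∈ Finset.univ.filter (fun l => j < l), A l n * q j l := by
        refine Finset.sum_congr rfl fun l hl => ?_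
        have hjl := (Finset.mem_filter.mp hl).2
        have : l ≠ k := fun hle => h (hle ▸ hjl)
        rw [Function.update_of_ne this]
      rw [this]
      ring
  rw [Finset.sum_congr rfl hj, Finset.sum_add_distrib, hBk, hinnerk]
  rw [split_erase k (fun l => A l n * q k l)]
  have : ∑ j ∈ Finset.univ.erase k, a n * (if j < k then A j n * q k j else 0)
      = a n * ∑ j ∈ Finset.univ.erase k, (if j < k then A j n * q k j else 0) := by
    rw [Finset.mul_sum]
  rw [this]
  ring


theorem stmt_7 (K N : ℕ) (hK : 1 ≤ K) (hN : 1 ≤ N)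
    (k : Fin K) (ε : ℝ) (hε : ε ∈ Set.Icc (0 : ℝ) 1)
    (A : Fin K → Fin N → ℝ)
    (hA0 : ∀ l, l ≠ k → ∀ n, 0 ≤ A l n) (hA1 : ∀ l, l ≠ k → ∑ n, A l n = 1)
    (p : (Fin K → Bool) → ℝ) (hp0 : ∀ x, 0 ≤ p x) (hp1 : ∑ x, p x = 1)
    (m : Fin N)
    (hm : ∀ n : Fin N,
      ∑ l ∈ Finset.univ.erase k, A l m * ∑ x : Fin K → Bool, p x * xv x k * xv x l ≤
      ∑ l ∈ Finset.univ.erase k, A l n * ∑ x : Fin K → Bool, p x * xv x k * xv x l) :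
    ∀ a : Fin N → ℝ, (∀ n, 0 ≤ a n) → ∑ n, a n = 1 →
      tildeT (Function.update A k a) ε p ≤
      tildeT (Function.update A k (fun n => if n = m then (1 : ℝ) else 0)) ε p := by
  intro a ha0 ha1
  have hq : ∀ i j : Fin K, (∑ x : Fin K → Bool, p x * xv x i * xv x j)
      = ∑ x : Fin K → Bool, p x * xv x j * xv x i :=
    fun i j => Finset.sum_congr rfl fun x _ => by ring
  unfold tildeT
  rw [key' k A (fun i j => ∑ x : Fin K → Bool, p x * xv x i * xv x j) hq a,
    key' k A (fun i j => ∑ x : Fin K → Bool, p x * xv x i * xv x j) hq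
      (fun n => if n = m then (1 : ℝ) else 0)]
  set S : Fin N → ℝ :=
    fun n => ∑ l ∈ Finset.univ.erase k, A l n * ∑ x : Fin K → Bool, p x * xv x k * xv x l
    with hS
  have hSm : ∑ n : Fin N, (if n = m then (1 : ℝ) else 0) * S n = S m := by
    simp [ite_mul]
  have hineq : S m ≤ ∑ n : Fin N, a n * S n := by
    calc S m = ∑ n : Fin N, a n * S m := by rw [← Finset.sum_mul, ha1, one_mul]
    _ ≤ ∑ n : Fin N, a n * S n :=
      Finset.sum_le_sum fun n _ => mul_le_mul_of_nonneg_left (hm n) (ha0 n)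
  rw [hSm]
  apply sub_le_sub_left
  apply mul_le_mul_of_nonneg_left _ (sq_nonneg ε)
  exact add_le_add_left hineq _
end

section
/- Let A ∈ ℝ^{K×N} be a feasible preamble selection matrix and p a joint device activity distribution. Set S₁ = Σ_{k=1}^K Σ_{x∈{0,1}^K} p_x x_k and S₂ = Σ_{n=1}^N Σ_{k=1}^K a_{k,n} Σ_{ℓ>k} a_{ℓ,n} Σ_{x∈{0,1}^K} p_x x_k x_ℓ, and assume S₂ > 0. Then ε* = min(1, S₁/(2 S₂)) is the unique maximizer of ε ↦ \tilde T(A,ε,p) over ε ∈ [0,1]; in particular \tilde T(A,ε*,p) ≥ \tilde T(A,ε,p) for all ε ∈ [0,1]. -/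
open Finset

theorem stmt_8 (K N : ℕ) (hK : 1 ≤ K) (hN : 1 ≤ N)
    (A : Fin K → Fin N → ℝ) (hA0 : ∀ k n, 0 ≤ A k n) (hA1 : ∀ k, ∑ n, A k n = 1)
    (p : (Fin K → Bool) → ℝ) (hp0 : ∀ x, 0 ≤ p x) (hp1 : ∑ x, p x = 1)
    (S₁ S₂ : ℝ)
    (hS₁ : S₁ = ∑ k : Fin K, ∑ x : Fin K → Bool, p x * xv x k)
    (hS₂ : S₂ = ∑ n : Fin N, ∑ k : Fin K, A k n *
      ∑ l ∈ Finset.univ.filter (fun l => k < l), A l n *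
        ∑ x : Fin K → Bool, p x * xv x k * xv x l)
    (hS₂pos : 0 < S₂)
    (εstar : ℝ) (hεstar : εstar = min 1 (S₁ / (2 * S₂))) :
    (∀ ε ∈ Set.Icc (0 : ℝ) 1, tildeT A ε p ≤ tildeT A εstar p) ∧
    (∀ ε ∈ Set.Icc (0 : ℝ) 1, tildeT A ε p = tildeT A εstar p → ε = εstar) := by
  have hT : ∀ ε : ℝ, tildeT A ε p = ε * S₁ - ε ^ 2 * S₂ := by
    intro ε; rw [tildeT, hS₁, hS₂]
  have hsec : ∀ ε ∈ Set.Icc (0:ℝ) 1, 0 ≤ (εstar - ε) * (S₁ - 2*S₂*εstar) := by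
    intro ε hε
    rcases min_cases 1 (S₁/(2*S₂)) with ⟨h1,h2⟩ | ⟨h1,h2⟩
    · have hnum : 2*S₂ ≤ S₁ := by
        have := (le_div_iff₀ (by positivity : (0:ℝ) < 2*S₂)).mp h2
        linarith
      have he : εstar = 1 := by rw [hεstar, h1]
      rw [he]; nlinarith [hε.2]
    · have hz : S₁ - 2*S₂*εstar = 0 := by
        rw [hεstar, h1]; field_simp; ring
      rw [hz, mul_zero]
  have key : ∀ ε : ℝ, tildeT A εstar p - tildeT A ε p
      = S₂ * (εstar - ε)^2 + (εstar - ε) * (S₁ - 2*S₂*εstar) := by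
    intro ε; rw [hT, hT]; ring
  constructor
  · intro ε hε
    have h1 := hsec ε hε
    nlinarith [key ε, sq_nonneg (εstar - ε)]
  · intro ε hε heq
    have h1 := hsec ε hε
    have h2 := key ε
    rw [heq, sub_self] at h2
    have h3 : S₂ * (εstar - ε)^2 ≤ 0 := by linarith
    have h4 : (εstar - ε)^2 = 0 := by nlinarith [sq_nonneg (εstar - ε)]
    have := pow_eq_zero_iff (n := 2) (by norm_num) |>.mp h4
    linarith [sub_eq_zero.mp this]
end

section
/- Fix x ∈ {0,1}^K and let f : ℝ^{K×N} → ℝ be the polynomial f(B) = T(B,1,x) in the KN entries b_{k,n} of B, with Hessian H(B) ∈ ℝ^{(KN)×(KN)}, H(B)_{(k,n),(k',n')} = ∂²f/∂b_{k,n}∂b_{k',n'}. Then for every B all of whose entries lie in [0,1], the matrix √N · ‖x‖₁² · I − H(B) is positive semidefinite, where ‖x‖₁ = Σ_{k=1}^K x_k and I is the (KN)×(KN) identity matrix. -/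
open Finset Matrix

/-- Conditional throughput T(B, 1, x), with B viewed as a function on index pairs. -/
noncomputable def T1 {K N : ℕ} (x : Fin K → Bool) (B : Fin K × Fin N → ℝ) : ℝ :=
  ∑ n : Fin N, ∑ k : Fin K,
    xv x k * B (k, n) * ∏ l ∈ Finset.univ.erase k, (1 - xv x l * B (l, n))

/-- Partial derivative of f : ℝ^{K×N} → ℝ with respect to the i-th coordinate, at B. -/
noncomputable def pderiv {K N : ℕ} (i : Fin K × Fin N)
    (f : (Fin K × Fin N → ℝ) → ℝ) (B : Fin K × Fin N → ℝ) : ℝ :=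
  deriv (fun t => f (Function.update B i t)) (B i)

/-- Hessian matrix of f at B. -/
noncomputable def hess {K N : ℕ} (f : (Fin K × Fin N → ℝ) → ℝ)
    (B : Fin K × Fin N → ℝ) : Matrix (Fin K × Fin N) (Fin K × Fin N) ℝ :=
  Matrix.of fun i j => pderiv i (fun B' => pderiv j f B') B

variable {K N : ℕ}

noncomputable def Pf (x : Fin K → Bool) (B : Fin K × Fin N → ℝ) (s : Finset (Fin K)) (n : Fin N) : ℝ :=
  ∏ l ∈ s, (1 - xv x l * B (l, n))

lemma prod_update_not_mem (x : Fin K → Bool) (B : Fin K × Fin N → ℝ) {s : Finset (Fin K)}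
    {k₀ : Fin K} {n₀ : Fin N} (t : ℝ) {n : Fin N} (h : k₀ ∉ s ∨ n₀ ≠ n) :
    ∏ l ∈ s, (1 - xv x l * Function.update B (k₀, n₀) t (l, n)) = Pf x B s n := by
  unfold Pf
  apply Finset.prod_congr rfl
  intro l hl
  have hne : (l, n) ≠ (k₀, n₀) := by
    intro he
    injection he with h1 h2
    rcases h with h | h
    · exact h (h1 ▸ hl)
    · exact h h2.symm
  rw [Function.update_of_ne hne]

lemma prod_update_mem (x : Fin K → Bool) (B : Fin K × Fin N → ℝ) {s : Finset (Fin K)}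
    {k₀ : Fin K} (t : ℝ) {n : Fin N} (h : k₀ ∈ s) :
    ∏ l ∈ s, (1 - xv x l * Function.update B (k₀, n) t (l, n))
      = (1 - xv x k₀ * t) * Pf x B (s.erase k₀) n := by
  rw [← Finset.mul_prod_erase _ _ h, Function.update_self,
    prod_update_not_mem x B t (Or.inl (Finset.notMem_erase _ _))]

noncomputable def Df (x : Fin K → Bool) (B : Fin K × Fin N → ℝ) (j : Fin K × Fin N) : ℝ :=
  xv x j.1 * Pf x B (univ.erase j.1) j.2
    - ∑ k ∈ univ.erase j.1, xv x k * B (k, j.2) * (xv x j.1 * Pf x B ((univ.erase k).erase j.1) j.2)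

lemma hasDerivAt_T1 (x : Fin K → Bool) (B : Fin K × Fin N → ℝ) (j : Fin K × Fin N) :
    HasDerivAt (fun t => T1 x (Function.update B j t)) (Df x B j) (B j) := by
  obtain ⟨k', n'⟩ := j
  have hg : (fun t => T1 x (Function.update B (k', n') t))
      = fun t => ((∑ n ∈ univ.erase n', ∑ k : Fin K,
            xv x k * B (k, n) * Pf x B (univ.erase k) n)
        + ((xv x k' * Pf x B (univ.erase k') n') * t
        + ∑ k ∈ univ.erase k', xv x k * B (k, n') *
            ((1 - xv x k' * t) * Pf x B ((univ.erase k).erase k') n'))) := by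
    funext t
    unfold T1
    rw [← Finset.sum_erase_add _ _ (Finset.mem_univ n')]
    congr 1
    · apply Finset.sum_congr rfl
      intro n hn
      have hn' : n' ≠ n := (Finset.ne_of_mem_erase hn).symm
      apply Finset.sum_congr rfl
      intro k _
      rw [Function.update_of_ne (by simp [Prod.ext_iff, hn'.symm]),
        prod_update_not_mem x B t (Or.inr hn')]
    · rw [← Finset.sum_erase_add _ _ (Finset.mem_univ k'), add_comm]
      congr 1
      · rw [Function.update_self, prod_update_not_mem x B t (Or.inl (Finset.notMem_erase _ _))]
        ring
      · apply Finset.sum_congr rfl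
        intro k hk
        have hkk : k ≠ k' := Finset.ne_of_mem_erase hk
        rw [Function.update_of_ne (by simp [Prod.ext_iff, hkk]),
          prod_update_mem x B t (Finset.mem_erase.2 ⟨hkk.symm, Finset.mem_univ _⟩)]
  rw [hg]
  have h1 : HasDerivAt (fun t : ℝ => (xv x k' * Pf x B (univ.erase k') n') * t)
      (xv x k' * Pf x B (univ.erase k') n') (B (k', n')) := by
    simpa using (hasDerivAt_id (B (k', n'))).const_mul (xv x k' * Pf x B (univ.erase k') n')
  have h2 : HasDerivAt (fun t : ℝ => ∑ k ∈ univ.erase k', xv x k * B (k, n') *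
        ((1 - xv x k' * t) * Pf x B ((univ.erase k).erase k') n'))
      (∑ k ∈ univ.erase k', xv x k * B (k, n') *
        (-(xv x k') * Pf x B ((univ.erase k).erase k') n')) (B (k', n')) := by
    apply HasDerivAt.fun_sum
    intro k _
    have hd : HasDerivAt (fun t : ℝ => 1 - xv x k' * t) (-(xv x k')) (B (k', n')) := by
      simpa using ((hasDerivAt_id (B (k', n'))).const_mul (xv x k')).const_sub 1
    simpa [mul_assoc] using
      ((hd.mul_const (Pf x B ((univ.erase k).erase k') n')).const_mul (xv x k * B (k, n')))
  have h3 := ((h1.add h2).const_add (∑ n ∈ univ.erase n', ∑ k : Fin K,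
      xv x k * B (k, n) * Pf x B (univ.erase k) n))
  refine h3.congr_deriv (Eq.symm ?_)
  unfold Df
  rw [sub_eq_add_neg, ← Finset.sum_neg_distrib]
  congr 1
  apply Finset.sum_congr rfl
  intros
  ring

lemma Pf_update_not_mem (x : Fin K → Bool) (B : Fin K × Fin N → ℝ) {s : Finset (Fin K)}
    {k₀ : Fin K} {n₀ : Fin N} (t : ℝ) {n : Fin N} (h : k₀ ∉ s ∨ n₀ ≠ n) :
    Pf x (Function.update B (k₀, n₀) t) s n = Pf x B s n :=
  prod_update_not_mem x B t h

lemma Pf_update_mem (x : Fin K → Bool) (B : Fin K × Fin N → ℝ) {s : Finset (Fin K)}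
    {k₀ : Fin K} (t : ℝ) {n : Fin N} (h : k₀ ∈ s) :
    Pf x (Function.update B (k₀, n) t) s n = (1 - xv x k₀ * t) * Pf x B (s.erase k₀) n :=
  prod_update_mem x B t h

lemma Df_update_const (x : Fin K → Bool) (B : Fin K × Fin N → ℝ) {k k' : Fin K} {n n' : Fin N}
    (t : ℝ) (h : n ≠ n' ∨ k = k') :
    Df x (Function.update B (k, n) t) (k', n') = Df x B (k', n') := by
  unfold Df
  congr 1
  · congr 1
    apply Pf_update_not_mem
    rcases h with h | h
    · exact Or.inr h
    · exact Or.inl (h ▸ Finset.notMem_erase _ _)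
  · apply Finset.sum_congr rfl
    intro k₁ hk₁
    have hne : (k₁, n') ≠ (k, n) := by
      intro he; injection he with h1 h2
      rcases h with h | h
      · exact h h2.symm
      · exact (Finset.ne_of_mem_erase hk₁) (h1.trans h)
    rw [Function.update_of_ne hne]
    congr 2
    apply Pf_update_not_mem
    rcases h with h | h
    · exact Or.inr h
    · exact Or.inl (h ▸ Finset.notMem_erase _ _)

noncomputable def Hval (x : Fin K → Bool) (B : Fin K × Fin N → ℝ) (k k' : Fin K) (n' : Fin N) : ℝ :=
  xv x k * xv x k' *
    ((∑ k₁ ∈ (univ.erase k').erase k, xv x k₁ * B (k₁, n') *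
        Pf x B (((univ.erase k₁).erase k').erase k) n')
      - Pf x B ((univ.erase k').erase k) n' - Pf x B ((univ.erase k).erase k') n')

lemma hasDerivAt_Df (x : Fin K → Bool) (B : Fin K × Fin N → ℝ) {k k' : Fin K} (n' : Fin N)
    (hkk : k ≠ k') :
    HasDerivAt (fun t => Df x (Function.update B (k, n') t) (k', n'))
      (Hval x B k k' n') (B (k, n')) := by
  have hkmem : k ∈ univ.erase k' := Finset.mem_erase.2 ⟨hkk, Finset.mem_univ _⟩
  have hg : (fun t => Df x (Function.update B (k, n') t) (k', n'))
      = fun t => (xv x k' * ((1 - xv x k * t) * Pf x B ((univ.erase k').erase k) n')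
        - ((xv x k * t * (xv x k' * Pf x B ((univ.erase k).erase k') n')
          + ∑ k₁ ∈ (univ.erase k').erase k, xv x k₁ * B (k₁, n') *
              (xv x k' * ((1 - xv x k * t) * Pf x B (((univ.erase k₁).erase k').erase k) n'))))) := by
    funext t
    unfold Df
    congr 1
    · rw [Pf_update_mem x B t hkmem]
    · rw [← Finset.sum_erase_add _ _ hkmem, add_comm]
      congr 1
      · rw [Function.update_self,
          Pf_update_not_mem x B t (Or.inl (by simp [Finset.mem_erase]))]
      · apply Finset.sum_congr rfl
        intro k₁ hk₁
        have hk₁k : k₁ ≠ k := Finset.ne_of_mem_erase hk₁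
        have hk₁k' : k₁ ≠ k' := Finset.ne_of_mem_erase (Finset.mem_of_mem_erase hk₁)
        rw [Function.update_of_ne (by intro he; injection he with h1 _; exact hk₁k h1),
          Pf_update_mem x B t (by simp [Finset.mem_erase, hkk, hk₁k.symm])]
  rw [hg]
  have hid := hasDerivAt_id (B (k, n'))
  have hlin : HasDerivAt (fun t : ℝ => 1 - xv x k * t) (-(xv x k)) (B (k, n')) := by
    simpa using (hid.const_mul (xv x k)).const_sub 1
  have h1 : HasDerivAt (fun t : ℝ => xv x k' * ((1 - xv x k * t) * Pf x B ((univ.erase k').erase k) n'))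
      (xv x k' * (-(xv x k) * Pf x B ((univ.erase k').erase k) n')) (B (k, n')) := by
    exact ((hlin.mul_const _).const_mul _)
  have h2 : HasDerivAt (fun t : ℝ => xv x k * t * (xv x k' * Pf x B ((univ.erase k).erase k') n'))
      (xv x k * (xv x k' * Pf x B ((univ.erase k).erase k') n')) (B (k, n')) := by
    have := (hid.const_mul (xv x k)).mul_const (xv x k' * Pf x B ((univ.erase k).erase k') n')
    simpa [mul_assoc] using this
  have h3 : HasDerivAt (fun t : ℝ => ∑ k₁ ∈ (univ.erase k').erase k, xv x k₁ * B (k₁, n') *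
        (xv x k' * ((1 - xv x k * t) * Pf x B (((univ.erase k₁).erase k').erase k) n')))
      (∑ k₁ ∈ (univ.erase k').erase k, xv x k₁ * B (k₁, n') *
        (xv x k' * (-(xv x k) * Pf x B (((univ.erase k₁).erase k').erase k) n'))) (B (k, n')) := by
    apply HasDerivAt.fun_sum
    intro k₁ _
    exact (((hlin.mul_const _).const_mul (xv x k')).const_mul _)
  have h4 := h1.sub (h2.add h3)
  refine h4.congr_deriv (Eq.symm ?_)
  unfold Hval
  have hsum : ∑ k₁ ∈ (univ.erase k').erase k, xv x k₁ * B (k₁, n') *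
        (xv x k' * (-(xv x k) * Pf x B (((univ.erase k₁).erase k').erase k) n'))
      = -(xv x k * xv x k' * ∑ k₁ ∈ (univ.erase k').erase k, xv x k₁ * B (k₁, n') *
        Pf x B (((univ.erase k₁).erase k').erase k) n') := by
    rw [Finset.mul_sum, ← Finset.sum_neg_distrib]
    apply Finset.sum_congr rfl
    intros; ring
  rw [hsum]
  ring

lemma hess_T1 (x : Fin K → Bool) (B : Fin K × Fin N → ℝ) (i j : Fin K × Fin N) :
    hess (T1 x) B i j
      = if i.2 = j.2 ∧ i.1 ≠ j.1 then Hval x B i.1 j.1 i.2 else 0 := by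
  obtain ⟨k, n⟩ := i
  obtain ⟨k', n'⟩ := j
  have step1 : hess (T1 x) B (k, n) (k', n')
      = pderiv (k, n) (fun B' => Df x B' (k', n')) B := by
    unfold hess
    simp only [Matrix.of_apply]
    congr 1
    funext B'
    exact (hasDerivAt_T1 x B' (k', n')).deriv
  rw [step1]
  unfold pderiv
  by_cases h : n = n' ∧ k ≠ k'
  · obtain ⟨rfl, hkk⟩ := h
    rw [if_pos ⟨rfl, hkk⟩]
    exact (hasDerivAt_Df x B n hkk).deriv
  · rw [if_neg (by simpa using h)]
    have hcond : n ≠ n' ∨ k = k' := by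
      rcases not_and_or.mp h with h | h
      · exact Or.inl h
      · exact Or.inr (not_not.mp h)
    have hconst : (fun t => Df x (Function.update B (k, n) t) (k', n'))
        = fun _ => Df x B (k', n') := funext fun t => Df_update_const x B t hcond
    rw [hconst, deriv_const]

lemma Hval_symm (x : Fin K → Bool) (B : Fin K × Fin N → ℝ) (k k' : Fin K) (n : Fin N) :
    Hval x B k k' n = Hval x B k' k n := by
  unfold Hval
  rw [show ((univ : Finset (Fin K)).erase k').erase k = (univ.erase k).erase k' from
    Finset.erase_right_comm]
  have h3 : ∀ k₁ : Fin K, (((univ : Finset (Fin K)).erase k₁).erase k').erase k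
      = (((univ : Finset (Fin K)).erase k₁).erase k).erase k' := fun k₁ => Finset.erase_right_comm
  simp only [h3]
  ring

lemma xv_nonneg (x : Fin K → Bool) (k : Fin K) : 0 ≤ xv x k := by
  unfold xv; split <;> norm_num

lemma xv_le_one (x : Fin K → Bool) (k : Fin K) : xv x k ≤ 1 := by
  unfold xv; split <;> norm_num

section bounds
variable {x : Fin K → Bool} {B : Fin K × Fin N → ℝ} (hB : ∀ i, B i ∈ Set.Icc (0 : ℝ) 1)
include hB

lemma Pf_nonneg (s : Finset (Fin K)) (n : Fin N) : 0 ≤ Pf x B s n := by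
  apply Finset.prod_nonneg
  intro l _
  have h1 := (hB (l, n)).1
  have h2 := (hB (l, n)).2
  have := xv_nonneg x l
  have := xv_le_one x l
  nlinarith

lemma Pf_le_one (s : Finset (Fin K)) (n : Fin N) : Pf x B s n ≤ 1 := by
  apply Finset.prod_le_one
  · intro l _
    have h1 := (hB (l, n)).1
    have h2 := (hB (l, n)).2
    have := xv_nonneg x l
    have := xv_le_one x l
    nlinarith
  · intro l _
    have h1 := (hB (l, n)).1
    have := xv_nonneg x l
    nlinarith

lemma Hval_abs_le {k k' : Fin K} (hkk : k ≠ k') (n : Fin N) :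
    |Hval x B k k' n| ≤ xv x k * xv x k' * ∑ l, xv x l := by
  set S := ∑ l, xv x l with hS
  rcases hx : x k with _ | _
  · have : xv x k = 0 := by unfold xv; rw [hx]; rfl
    rw [Hval, this]
    simp
  rcases hx' : x k' with _ | _
  · have : xv x k' = 0 := by unfold xv; rw [hx']; rfl
    rw [Hval, this]
    simp
  have hxk : xv x k = 1 := by unfold xv; rw [hx]; rfl
  have hxk' : xv x k' = 1 := by unfold xv; rw [hx']; rfl
  have hS2 : 2 ≤ S := by
    have hsub : ({k, k'} : Finset (Fin K)) ⊆ univ := Finset.subset_univ _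
    have := Finset.sum_le_sum_of_subset_of_nonneg hsub
      (fun i _ _ => xv_nonneg x i)
    rw [Finset.sum_pair hkk, hxk, hxk'] at this
    linarith
  have hsum_nonneg : 0 ≤ ∑ k₁ ∈ (univ.erase k').erase k, xv x k₁ * B (k₁, n) *
      Pf x B (((univ.erase k₁).erase k').erase k) n := by
    apply Finset.sum_nonneg
    intro k₁ _
    have := (hB (k₁, n)).1
    have := xv_nonneg x k₁
    have := Pf_nonneg (x := x) hB (((univ.erase k₁).erase k').erase k) n
    positivity
  have hsum_le : ∑ k₁ ∈ (univ.erase k').erase k, xv x k₁ * B (k₁, n) *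
      Pf x B (((univ.erase k₁).erase k').erase k) n ≤ S - 2 := by
    have hle : ∀ k₁ ∈ (univ.erase k').erase k, xv x k₁ * B (k₁, n) *
        Pf x B (((univ.erase k₁).erase k').erase k) n ≤ xv x k₁ := by
      intro k₁ _
      have h1 := (hB (k₁, n)).1
      have h2 := (hB (k₁, n)).2
      have h3 := xv_nonneg x k₁
      have h4 := Pf_nonneg (x := x) hB (((univ.erase k₁).erase k').erase k) n
      have h5 := Pf_le_one (x := x) hB (((univ.erase k₁).erase k').erase k) n
      nlinarith [mul_nonneg h3 h1, mul_le_mul_of_nonneg_left h2 h3,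
        mul_le_mul_of_nonneg_left h5 (mul_nonneg h3 h1)]
    calc _ ≤ ∑ k₁ ∈ (univ.erase k').erase k, xv x k₁ := Finset.sum_le_sum hle
      _ = S - 2 := by
        have hk : k ∈ univ.erase k' := Finset.mem_erase.2 ⟨hkk, Finset.mem_univ _⟩
        have e1 := Finset.sum_erase_add (univ.erase k') (xv x) hk
        have e2 := Finset.sum_erase_add univ (xv x) (Finset.mem_univ k')
        rw [hxk] at e1
        rw [hxk'] at e2
        rw [← hS] at e2
        linarith
  have hP1n := Pf_nonneg (x := x) hB ((univ.erase k').erase k) n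
  have hP11 := Pf_le_one (x := x) hB ((univ.erase k').erase k) n
  have hP2n := Pf_nonneg (x := x) hB ((univ.erase k).erase k') n
  have hP21 := Pf_le_one (x := x) hB ((univ.erase k).erase k') n
  rw [Hval, hxk, hxk']
  rw [abs_le]
  constructor <;> [skip; skip] <;> nlinarith

end bounds

lemma psd_dom {ι : Type*} [Fintype ι] [DecidableEq ι] (M : Matrix ι ι ℝ) (c : ℝ)
    (hsym : ∀ i j, M i j = M j i) (hdom : ∀ i, ∑ j, |M i j| ≤ c) :
    (c • (1 : Matrix ι ι ℝ) - M).PosSemidef := by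
  rw [Matrix.posSemidef_iff_dotProduct_mulVec]
  constructor
  · unfold Matrix.IsHermitian
    ext i j
    simp only [Matrix.conjTranspose_apply, Matrix.sub_apply, Matrix.smul_apply,
      Matrix.one_apply, star_trivial, smul_eq_mul]
    rw [hsym j i]
    by_cases h : i = j <;> simp [h, eq_comm]
  · intro v
    have hv : star v = v := by simp
    rw [hv]
    have expand : dotProduct v ((c • (1 : Matrix ι ι ℝ) - M) *ᵥ v)
        = c * ∑ i, v i ^ 2 - ∑ i, ∑ j, v i * M i j * v j := by
      simp only [dotProduct, Matrix.mulVec, dotProduct, Matrix.sub_apply,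
        Matrix.smul_apply, Matrix.one_apply, smul_eq_mul, sub_mul, mul_ite, mul_one, mul_zero,
        ite_mul, zero_mul, Finset.sum_sub_distrib, Finset.sum_ite_eq, Finset.mem_univ, if_true,
        mul_sub]
      rw [Finset.mul_sum]
      congr 1
      · apply Finset.sum_congr rfl; intro i _; ring
      · apply Finset.sum_congr rfl; intro i _; rw [Finset.mul_sum]
        apply Finset.sum_congr rfl; intro j _; ring
    rw [expand]
    have key : ∑ i, ∑ j, v i * M i j * v j ≤ ∑ i, ∑ j, |M i j| * ((v i ^ 2 + v j ^ 2) / 2) := by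
      apply Finset.sum_le_sum; intro i _; apply Finset.sum_le_sum; intro j _
      have h2 : |v i * M i j * v j| = |M i j| * (|v i| * |v j|) := by
        rw [abs_mul, abs_mul]; ring
      have h3 : |v i| * |v j| ≤ (v i ^ 2 + v j ^ 2) / 2 := by
        nlinarith [sq_nonneg (|v i| - |v j|), sq_abs (v i), sq_abs (v j)]
      calc v i * M i j * v j ≤ |M i j| * (|v i| * |v j|) := by rw [← h2]; exact le_abs_self _
        _ ≤ |M i j| * ((v i ^ 2 + v j ^ 2) / 2) :=
            mul_le_mul_of_nonneg_left h3 (abs_nonneg _)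
    have key2 : ∑ i, ∑ j, |M i j| * ((v i ^ 2 + v j ^ 2) / 2) = ∑ i, (∑ j, |M i j|) * v i ^ 2 := by
      have h4 : ∀ i j : ι, |M i j| * ((v i ^ 2 + v j ^ 2) / 2)
          = |M i j| * v i ^ 2 / 2 + |M i j| * v j ^ 2 / 2 := by intros; ring
      simp_rw [h4, Finset.sum_add_distrib]
      rw [Finset.sum_comm (f := fun i j => |M i j| * v j ^ 2 / 2)]
      have h6 : (∑ i, ∑ j, |M j i| * v i ^ 2 / 2) = ∑ i, ∑ j, |M i j| * v i ^ 2 / 2 := by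
        apply Finset.sum_congr rfl; intro i _
        apply Finset.sum_congr rfl; intro j _
        rw [hsym]
      rw [h6, ← Finset.sum_add_distrib]
      apply Finset.sum_congr rfl; intro i _
      rw [← Finset.sum_add_distrib, Finset.sum_mul]
      apply Finset.sum_congr rfl; intro j _; ring
    have key3 : ∑ i, (∑ j, |M i j|) * v i ^ 2 ≤ ∑ i, c * v i ^ 2 :=
      Finset.sum_le_sum fun i _ => mul_le_mul_of_nonneg_right (hdom i) (sq_nonneg _)
    have final : ∑ i, ∑ j, v i * M i j * v j ≤ c * ∑ i, v i ^ 2 := by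
      calc ∑ i, ∑ j, v i * M i j * v j ≤ _ := key
        _ = _ := key2
        _ ≤ ∑ i, c * v i ^ 2 := key3
        _ = c * ∑ i, v i ^ 2 := by rw [Finset.mul_sum]
    linarith


theorem stmt_13 (K N : ℕ) (hK : 1 ≤ K) (hN : 1 ≤ N)
    (x : Fin K → Bool) (B : Fin K × Fin N → ℝ)
    (hB : ∀ i, B i ∈ Set.Icc (0 : ℝ) 1) :
    ((Real.sqrt N * (∑ k : Fin K, xv x k) ^ 2) •
        (1 : Matrix (Fin K × Fin N) (Fin K × Fin N) ℝ) - hess (T1 x) B).PosSemidef := by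
  set S : ℝ := ∑ k : Fin K, xv x k with hS
  have hS0 : 0 ≤ S := Finset.sum_nonneg fun l _ => xv_nonneg x l
  apply psd_dom
  · -- symmetry
    intro i j
    rw [hess_T1, hess_T1]
    by_cases h : i.2 = j.2 ∧ i.1 ≠ j.1
    · rw [if_pos h, if_pos ⟨h.1.symm, h.2.symm⟩, h.1, Hval_symm]
    · have h' : ¬(j.2 = i.2 ∧ j.1 ≠ i.1) := by
        intro hc; exact h ⟨hc.1.symm, hc.2.symm⟩
      rw [if_neg h, if_neg h']
  · -- row sums
    rintro ⟨k, n⟩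
    have hsqrt : (1 : ℝ) ≤ Real.sqrt N := by
      rw [Real.one_le_sqrt]
      exact_mod_cast hN
    have step : ∑ j : Fin K × Fin N, |hess (T1 x) B (k, n) j| ≤ S * S := by
      rw [Fintype.sum_prod_type]
      have inner : ∀ k' : Fin K, (∑ n' : Fin N, |hess (T1 x) B (k, n) (k', n')|)
          = if k ≠ k' then |Hval x B k k' n| else 0 := by
        intro k'
        have : ∀ n' : Fin N, |hess (T1 x) B (k, n) (k', n')|
            = if n = n' then (if k ≠ k' then |Hval x B k k' n| else 0) else 0 := by
          intro n'
          rw [hess_T1]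
          by_cases h1 : n = n' <;> by_cases h2 : k ≠ k' <;>
            simp [h1, h2, abs_of_nonneg]
        simp_rw [this]
        rw [Finset.sum_ite_eq]
        simp
      simp_rw [inner]
      have bound : ∀ k' : Fin K, (if k ≠ k' then |Hval x B k k' n| else 0) ≤ xv x k' * S := by
        intro k'
        split
        · rename_i hkk
          have h1 := Hval_abs_le (x := x) hB hkk n
          rw [← hS] at h1
          have h2 := xv_le_one x k
          have h3 := xv_nonneg x k'
          nlinarith [mul_nonneg h3 hS0]
        · exact mul_nonneg (xv_nonneg x _) hS0
      calc ∑ k', (if k ≠ k' then |Hval x B k k' n| else 0) ≤ ∑ k' : Fin K, xv x k' * S :=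
            Finset.sum_le_sum fun k' _ => bound k'
        _ = S * S := by rw [← Finset.sum_mul]
    calc ∑ j : Fin K × Fin N, |hess (T1 x) B (k, n) j| ≤ S * S := step
      _ ≤ Real.sqrt N * S ^ 2 := by nlinarith
end

section
/- Let N ≥ 2, c ∈ ℝ^N, and suppose c has a unique maximal entry at index n*; let Δ = c_{n*} − max_{n ≠ n*} c_n > 0. Let a⁰ be any vector in the probability simplex of ℝ^N and let ω satisfy 0 < ω < Δ/4. Then e_{n*} is the unique maximizer over the probability simplex of the function Q(a) = Σ_{n=1}^N c_n a_n − ω Σ_{n=1}^N (a_n − a⁰_n)²; that is, Q(a) ≤ Q(e_{n*}) for every a in the simplex, with equality only when a = e_{n*}. -/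
open Finset

private lemma key_gap (N : ℕ) (c : Fin N → ℝ) (nstar : Fin N)
    (hmax : ∀ n, n ≠ nstar → c n < c nstar)
    (hSne : (Finset.univ.erase nstar).Nonempty)
    (Δ ω : ℝ)
    (hΔ : Δ = c nstar - (Finset.univ.erase nstar).sup' hSne c)
    (hω0 : 0 < ω)
    (a0 : Fin N → ℝ) (ha00 : ∀ n, 0 ≤ a0 n) (ha01 : ∑ n, a0 n = 1)
    (a : Fin N → ℝ) (ha : ∀ n, 0 ≤ a n) (ha1 : ∑ n, a n = 1) :
    (∑ n, c n * a n - ω * ∑ n, (a n - a0 n) ^ 2) +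
      (Δ - 4 * ω) * (∑ n ∈ Finset.univ.erase nstar, a n) ≤
      c nstar - ω * ∑ n, ((if n = nstar then (1 : ℝ) else 0) - a0 n) ^ 2 := by
  set S := Finset.univ.erase nstar with hSdef
  have hsplit : ∀ f : Fin N → ℝ, (∑ n ∈ S, f n) + f nstar = ∑ n, f n :=
    fun f => Finset.sum_erase_add _ _ (Finset.mem_univ _)
  have h1 : (∑ n ∈ S, a n) + a nstar = 1 := by rw [hsplit]; exact ha1
  have hs0 : 0 ≤ ∑ n ∈ S, a n := Finset.sum_nonneg fun n _ => ha n
  have hale : ∀ n, a n ≤ 1 := by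
    intro n
    calc a n ≤ ∑ m, a m := Finset.single_le_sum (fun i _ => ha i) (Finset.mem_univ n)
    _ = 1 := ha1
  have ha0le : ∀ n, a0 n ≤ 1 := by
    intro n
    calc a0 n ≤ ∑ m, a0 m := Finset.single_le_sum (fun i _ => ha00 i) (Finset.mem_univ n)
    _ = 1 := ha01
  -- linear part
  have hcle : ∀ n ∈ S, c n ≤ c nstar - Δ := by
    intro n hn
    have : c n ≤ S.sup' hSne c := Finset.le_sup' c hn
    rw [hΔ]; linarith
  have hlin : ∑ n, c n * a n ≤ c nstar - Δ * (∑ n ∈ S, a n) := by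
    rw [← hsplit (fun n => c n * a n)]
    have h2 : ∑ n ∈ S, c n * a n ≤ ∑ n ∈ S, (c nstar - Δ) * a n := by
      apply Finset.sum_le_sum
      intro n hn
      exact mul_le_mul_of_nonneg_right (hcle n hn) (ha n)
    rw [← Finset.mul_sum] at h2
    have hx : c nstar * (∑ n ∈ S, a n) + c nstar * a nstar = c nstar := by
      rw [← mul_add, h1, mul_one]
    linarith [h2, hx]
  -- quadratic part
  have hterm : ∀ n, ((if n = nstar then (1 : ℝ) else 0) - a0 n) ^ 2 ≤
      (a n - a0 n) ^ 2 + (if n = nstar then 2 * (1 - a n) else 2 * a n) := by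
    intro n
    by_cases h : n = nstar <;> simp only [h, if_pos, if_neg, ite_true, ite_false]
    · nlinarith [ha nstar, ha0le nstar, hale nstar, ha00 nstar]
    · nlinarith [ha n, ha0le n, hale n, ha00 n]
  have hquad : ∑ n, ((if n = nstar then (1 : ℝ) else 0) - a0 n) ^ 2 ≤
      ∑ n, (a n - a0 n) ^ 2 + (2 * (1 - a nstar) + 2 * ∑ n ∈ S, a n) := by
    have h3 : ∑ n, ((if n = nstar then (1 : ℝ) else 0) - a0 n) ^ 2 ≤
        ∑ n, ((a n - a0 n) ^ 2 + (if n = nstar then 2 * (1 - a n) else 2 * a n)) :=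
      Finset.sum_le_sum fun n _ => hterm n
    rw [Finset.sum_add_distrib] at h3
    have h4 : ∑ n, (if n = nstar then 2 * (1 - a n) else 2 * a n)
        = (∑ n ∈ S, 2 * a n) + 2 * (1 - a nstar) := by
      rw [← hsplit (fun n => if n = nstar then 2 * (1 - a n) else 2 * a n)]
      simp only [if_pos rfl]
      congr 1
      apply Finset.sum_congr rfl
      intro n hn
      rw [if_neg (Finset.ne_of_mem_erase hn)]
    rw [h4, ← Finset.mul_sum] at h3
    linarith
  have hsum1 : 1 - a nstar = ∑ n ∈ S, a n := by linarith
  rw [hsum1] at hquad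
  nlinarith [hquad, hlin, hω0, hs0]

theorem stmt_15 (N : ℕ) (hN : 2 ≤ N) (c : Fin N → ℝ) (nstar : Fin N)
    (hmax : ∀ n, n ≠ nstar → c n < c nstar)
    (Δ ω : ℝ)
    (hΔ : Δ = c nstar - (Finset.univ.erase nstar).sup'
      (by
        rw [← Finset.card_pos, Finset.card_erase_of_mem (Finset.mem_univ _),
          Finset.card_univ, Fintype.card_fin]
        omega) c)
    (hω0 : 0 < ω) (hω : ω < Δ / 4)
    (a0 : Fin N → ℝ) (ha00 : ∀ n, 0 ≤ a0 n) (ha01 : ∑ n, a0 n = 1) :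
    (∀ a : Fin N → ℝ, (∀ n, 0 ≤ a n) → ∑ n, a n = 1 →
      ∑ n, c n * a n - ω * ∑ n, (a n - a0 n) ^ 2 ≤
        ∑ n, c n * (if n = nstar then (1 : ℝ) else 0) -
          ω * ∑ n, ((if n = nstar then (1 : ℝ) else 0) - a0 n) ^ 2) ∧
    (∀ a : Fin N → ℝ, (∀ n, 0 ≤ a n) → ∑ n, a n = 1 →
      ∑ n, c n * a n - ω * ∑ n, (a n - a0 n) ^ 2 =
        ∑ n, c n * (if n = nstar then (1 : ℝ) else 0) -
          ω * ∑ n, ((if n = nstar then (1 : ℝ) else 0) - a0 n) ^ 2 →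
      a = fun n => if n = nstar then (1 : ℝ) else 0) := by
  have hSne : (Finset.univ.erase nstar).Nonempty := by
    rw [← Finset.card_pos, Finset.card_erase_of_mem (Finset.mem_univ _),
      Finset.card_univ, Fintype.card_fin]
    omega
  have hΔ' : Δ = c nstar - (Finset.univ.erase nstar).sup' hSne c := hΔ
  have hcstar : ∑ n, c n * (if n = nstar then (1 : ℝ) else 0) = c nstar := by
    simp [mul_ite, mul_one, mul_zero]
  have hgap := fun a ha ha1 =>
    key_gap N c nstar hmax hSne Δ ω hΔ' hω0 a0 ha00 ha01 a ha ha1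
  have hΔω : 0 < Δ - 4 * ω := by linarith
  constructor
  · intro a ha ha1
    have := hgap a ha ha1
    have hs0 : 0 ≤ ∑ n ∈ Finset.univ.erase nstar, a n :=
      Finset.sum_nonneg fun n _ => ha n
    rw [hcstar]
    nlinarith [mul_nonneg (le_of_lt hΔω) hs0]
  · intro a ha ha1 heq
    rw [hcstar] at heq
    have hg := hgap a ha ha1
    have hs0 : 0 ≤ ∑ n ∈ Finset.univ.erase nstar, a n :=
      Finset.sum_nonneg fun n _ => ha n
    have hszero : ∑ n ∈ Finset.univ.erase nstar, a n = 0 := by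
      nlinarith [mul_nonneg (le_of_lt hΔω) hs0]
    have hzero : ∀ n ∈ Finset.univ.erase nstar, a n = 0 :=
      (Finset.sum_eq_zero_iff_of_nonneg fun n _ => ha n).mp hszero
    have hstar : a nstar = 1 := by
      have := Finset.sum_erase_add Finset.univ a (Finset.mem_univ nstar)
      rw [hszero] at this
      rw [ha1] at this
      linarith
    funext n
    by_cases h : n = nstar
    · simp [h, hstar]
    · simp [h, hzero n (Finset.mem_erase.mpr ⟨h, Finset.mem_univ n⟩)]
end
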